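/- arXiv:1704.03195 — 6 statements merged into one kernel-verified Lean document; each statement's English description precedes it below -/
import Mathlib

section
/- Generalized coarea formula: let n ≥ 1, r > 0, Ω ⊆ ℝⁿ be open, and let u be a locally integrable real-valued function on the open r-neighborhood Ω ⊕ B_r. Then ∫_Ω osc_{B_r(x)} u dx = 2r ∫_{-∞}^{+∞} Per_r({u > s}, Ω) ds, as an identity in [0, +∞]. -/
/-!
For each `x`, the oscillation of `u` on `B_r(x)` is the length of the set of levels `s` at which
`{u > s}` splits `B_r(x)` into two parts of positive measure, since up to an endpoint this set is
the interval between the essential infimum and supremum of `u` on the ball. By the Lebesgue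
density theorem and the connectedness of the ball, these are exactly the levels for which the
ball meets the boundary of the density-one representative of `{u > s}`, that is, for which
`x ∈ ∂{u > s} ⊕ B_r`. So both sides of the formula are the measure of one measurable subset of
`Ω × ℝ`, computed by slicing along `x` and along `s` respectively.
-/

open MeasureTheory Metric Set Filter Topology
open scoped RealInnerProductSpace ENNReal

noncomputable section

/-- The set of points of Lebesgue density one of `E`. -/
def densityOnePoints (n : ℕ) (E : Set (EuclideanSpace ℝ (Fin n))) :
    Set (EuclideanSpace ℝ (Fin n)) :=
  {x | Tendsto (fun ρ : ℝ => volume (E ∩ ball x ρ) / volume (ball x ρ)) (𝓝[>] 0) (𝓝 1)}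

/-- The `r`-perimeter `Per_r(E, Ω) = (1/(2r)) Lⁿ((∂E ⊕ B_r) ∩ Ω)`, where `E` is identified with
its points of density one, `∂E` is the topological boundary of that set, and
`A ⊕ B_r` is the open `r`-neighbourhood of `A`. -/
def perR (n : ℕ) (r : ℝ) (E Ω : Set (EuclideanSpace ℝ (Fin n))) : ℝ≥0∞ :=
  volume (Metric.thickening r (frontier (densityOnePoints n E)) ∩ Ω) / ENNReal.ofReal (2 * r)

/-- The oscillation `osc_{B_r(x)} u = esssup_{B_r(x)} u - essinf_{B_r(x)} u`, as an element
of `[0, ∞]`, expressed as the essential supremum of `u y - u z` over `B_r(x) × B_r(x)`. -/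
def oscBall (n : ℕ) (r : ℝ) (u : EuclideanSpace ℝ (Fin n) → ℝ)
    (x : EuclideanSpace ℝ (Fin n)) : ℝ≥0∞ :=
  essSup (fun p : EuclideanSpace ℝ (Fin n) × EuclideanSpace ℝ (Fin n) =>
      ENNReal.ofReal (u p.1 - u p.2))
    ((volume.restrict (ball x r)).prod (volume.restrict (ball x r)))

section SplittingLevels

variable {α : Type*} [MeasurableSpace α]

def splittingLevels (μ : Measure α) (u : α → ℝ) : Set ℝ :=
  {s | 0 < μ {y | s < u y} ∧ 0 < μ {y | u y ≤ s}}

theorem ae_forall_lt_measure_setOf_lt_pos (μ : Measure α) (u : α → ℝ) :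
    ∀ᵐ y ∂μ, ∀ s < u y, 0 < μ {z | s < u z} := by
  have hrat : ∀ q : ℚ, ∀ᵐ y ∂μ, (q : ℝ) < u y → 0 < μ {z | (q : ℝ) < u z} := by
    intro q
    rcases eq_zero_or_pos (μ {z | (q : ℝ) < u z}) with hq | hq
    · exact (measure_eq_zero_iff_ae_notMem.1 hq).mono fun y hy hyq => absurd hyq hy
    · exact Eventually.of_forall fun _ _ => hq
  filter_upwards [ae_all_iff.2 hrat] with y hy s hs
  obtain ⟨q, hsq, hqy⟩ := exists_rat_btwn hs
  exact (hy q hqy).trans_le (measure_mono fun z hz => hsq.trans hz)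

theorem ae_forall_gt_measure_setOf_le_pos (μ : Measure α) (u : α → ℝ) :
    ∀ᵐ y ∂μ, ∀ s, u y < s → 0 < μ {z | u z ≤ s} := by
  filter_upwards [ae_forall_lt_measure_setOf_lt_pos μ (-u)] with y hy s hs
  refine (hy (-s) (by simpa using hs)).trans_le (measure_mono fun z hz => ?_)
  simp only [mem_ofPred_eq, Pi.neg_apply, neg_lt_neg_iff] at hz ⊢
  exact hz.le

theorem ofReal_sub_le_essSup_prod {μ : Measure α} [SFinite μ] {u : α → ℝ} {a b : ℝ}
    (hb : 0 < μ {y | b < u y}) (ha : 0 < μ {y | u y ≤ a}) :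
    ENNReal.ofReal (b - a) ≤
      essSup (fun p : α × α => ENNReal.ofReal (u p.1 - u p.2)) (μ.prod μ) := by
  set f := fun p : α × α => ENNReal.ofReal (u p.1 - u p.2)
  have hpos : μ.prod μ ({y | b < u y} ×ˢ {y | u y ≤ a}) ≠ 0 := by
    rw [Measure.prod_prod]
    exact (ENNReal.mul_pos hb.ne' ha.ne').ne'
  obtain ⟨p, ⟨hp₁, hp₂⟩, hp⟩ :
      (({y | b < u y} ×ˢ {y | u y ≤ a}) ∩ {p | f p ≤ essSup f (μ.prod μ)}).Nonempty := by
    refine nonempty_of_measure_ne_zero (μ := μ.prod μ) ?_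
    rwa [measure_inter_conull (ENNReal.ae_le_essSup f)]
  refine le_trans (ENNReal.ofReal_le_ofReal ?_) hp
  simp only [mem_ofPred_eq] at hp₁ hp₂
  linarith

theorem volume_splittingLevels_le_essSup {μ : Measure α} [SFinite μ] (u : α → ℝ) :
    volume (splittingLevels μ u) ≤
      essSup (fun p : α × α => ENNReal.ofReal (u p.1 - u p.2)) (μ.prod μ) := by
  refine (Real.volume_le_diam _).trans (Metric.ediam_le fun a ha b hb => ?_)
  rw [edist_dist, Real.dist_eq]
  rcases le_total a b with hab | hba
  · rw [abs_sub_comm, abs_of_nonneg (sub_nonneg.2 hab)]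
    exact ofReal_sub_le_essSup_prod hb.1 ha.2
  · rw [abs_of_nonneg (sub_nonneg.2 hba)]
    exact ofReal_sub_le_essSup_prod ha.1 hb.2

theorem essSup_le_volume_splittingLevels {μ : Measure α} (u : α → ℝ) :
    essSup (fun p : α × α => ENNReal.ofReal (u p.1 - u p.2)) (μ.prod μ) ≤
      volume (splittingLevels μ u) := by
  refine essSup_le_of_ae_le _ ?_
  filter_upwards [Measure.quasiMeasurePreserving_fst.ae (ae_forall_lt_measure_setOf_lt_pos μ u),
    Measure.quasiMeasurePreserving_snd.ae (ae_forall_gt_measure_setOf_le_pos μ u)]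
    with p hp₁ hp₂
  rw [← Real.volume_Ioo]
  exact measure_mono fun s hs => ⟨hp₁ s hs.2, hp₂ s hs.1⟩

theorem essSup_ofReal_sub_eq_volume_splittingLevels {μ : Measure α} [SFinite μ]
    (u : α → ℝ) :
    essSup (fun p : α × α => ENNReal.ofReal (u p.1 - u p.2)) (μ.prod μ) =
      volume (splittingLevels μ u) :=
  (essSup_le_volume_splittingLevels u).antisymm (volume_splittingLevels_le_essSup u)

end SplittingLevels

theorem measurable_measure_restrict_ball_setOf {α : Type*} [PseudoMetricSpace α]
    [MeasurableSpace α] [OpensMeasurableSpace α] [SecondCountableTopology α]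
    (μ : Measure α) [SFinite μ] {S : Set (ℝ × α)} (hS : MeasurableSet S) (r : ℝ) :
    Measurable fun p : α × ℝ => μ.restrict (ball p.1 r) {y | (p.2, y) ∈ S} := by
  have hS' : MeasurableSet {q : (α × ℝ) × α | (q.1.2, q.2) ∈ S ∧ dist q.2 q.1.1 < r} :=
    (hS.preimage ((measurable_snd.comp measurable_fst).prodMk measurable_snd)).inter
      (measurableSet_lt (measurable_snd.dist (measurable_fst.comp measurable_fst))
        measurable_const)
  convert measurable_measure_prodMk_left (ν := μ) hS' using 2 with p
  rw [Measure.restrict_apply' measurableSet_ball]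
  rfl

theorem measurableSet_setOf_mem_splittingLevels_restrict_ball {α : Type*} [PseudoMetricSpace α]
    [MeasurableSpace α] [OpensMeasurableSpace α] [SecondCountableTopology α]
    (μ : Measure α) [SFinite μ] {u : α → ℝ} (hu : Measurable u) (r : ℝ) :
    MeasurableSet {p : α × ℝ | p.2 ∈ splittingLevels (μ.restrict (ball p.1 r)) u} :=
  (measurableSet_lt measurable_const (measurable_measure_restrict_ball_setOf μ
      (measurableSet_lt measurable_fst (hu.comp measurable_snd)) r)).inter
    (measurableSet_lt measurable_const (measurable_measure_restrict_ball_setOf μ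
      (measurableSet_le (hu.comp measurable_snd) measurable_fst) r))

theorem IsPreconnected.inter_frontier_nonempty {X : Type*} [TopologicalSpace X] {s t : Set X}
    (hs : IsPreconnected s) (hst : (s ∩ t).Nonempty) (hst' : (s \ t).Nonempty) :
    (s ∩ frontier t).Nonempty := by
  by_contra h
  have hcover : s ⊆ interior t ∪ (closure t)ᶜ := fun y hy => by
    by_cases hyi : y ∈ interior t
    · exact Or.inl hyi
    · exact Or.inr fun hyt => h ⟨y, hy, hyt, hyi⟩
  have hsub : s ⊆ interior t := by
    refine hs.subset_left_of_subset_union isOpen_interior isClosed_closure.isOpen_compl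
      (disjoint_compl_right.mono_left interior_subset_closure) hcover ?_
    obtain ⟨y, hys, hyt⟩ := hst
    exact ⟨y, hys, (hcover hys).resolve_right (not_not.2 (subset_closure hyt))⟩
  obtain ⟨y, hys, hyt⟩ := hst'
  exact hyt (interior_subset (hsub hys))

theorem addHaar_closedBall_ae_eq_ball {E : Type*} [NormedAddCommGroup E] [NormedSpace ℝ E]
    [MeasurableSpace E] [BorelSpace E] [FiniteDimensional ℝ E] (μ : Measure E)
    [μ.IsAddHaarMeasure] (x : E) {ρ : ℝ} (hρ : ρ ≠ 0) :
    closedBall x ρ =ᵐ[μ] ball x ρ :=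
  (ae_eq_set.2 ⟨by rw [closedBall_sdiff_ball, Measure.addHaar_sphere_of_ne_zero μ x hρ],
    by rw [sdiff_eq_empty.2 ball_subset_closedBall, measure_empty]⟩)

section DensityOnePoints

variable {n : ℕ} {W : Set (EuclideanSpace ℝ (Fin n))}

theorem densityOnePoints_ae_eq (hW : MeasurableSet W) : densityOnePoints n W =ᵐ[volume] W := by
  refine eventuallyEq_set.2 ?_
  filter_upwards [Besicovitch.ae_tendsto_measure_inter_div_of_measurableSet volume hW] with y hy
  have hball : Tendsto (fun ρ : ℝ => volume (W ∩ ball y ρ) / volume (ball y ρ)) (𝓝[>] 0)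
      (𝓝 (W.indicator 1 y)) := by
    refine hy.congr' ?_
    filter_upwards [self_mem_nhdsWithin] with ρ (hρ : 0 < ρ)
    have hae := addHaar_closedBall_ae_eq_ball volume y hρ.ne'
    rw [measure_congr hae, measure_congr ((ae_eq_refl W).inter hae)]
  by_cases hyW : y ∈ W
  · simpa [densityOnePoints, hyW] using hball
  · simp only [densityOnePoints, mem_ofPred_eq, hyW, iff_false]
    rw [indicator_of_notMem hyW] at hball
    exact fun h => zero_ne_one (tendsto_nhds_unique hball h)

theorem disjoint_densityOnePoints_of_measure_inter_eq_zero {U : Set (EuclideanSpace ℝ (Fin n))}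
    (hU : IsOpen U) (h : volume (W ∩ U) = 0) : Disjoint U (densityOnePoints n W) := by
  refine disjoint_left.2 fun y hy hyW => zero_ne_one (tendsto_nhds_unique ?_ hyW)
  refine tendsto_const_nhds.congr' ?_
  filter_upwards [(eventually_ball_subset (hU.mem_nhds hy)).filter_mono nhdsWithin_le_nhds]
    with ρ hρ
  rw [measure_mono_null (inter_subset_inter_right W hρ) h, ENNReal.zero_div]

theorem subset_densityOnePoints_of_measure_compl_inter_eq_zero
    {U : Set (EuclideanSpace ℝ (Fin n))} (hU : IsOpen U) (h : volume (Wᶜ ∩ U) = 0) :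
    U ⊆ densityOnePoints n W := by
  intro y hy
  refine tendsto_const_nhds.congr' ?_
  filter_upwards [(eventually_ball_subset (hU.mem_nhds hy)).filter_mono nhdsWithin_le_nhds,
    self_mem_nhdsWithin] with ρ hρ (hρ₀ : 0 < ρ)
  have hnull : volume (ball y ρ \ W) = 0 :=
    measure_mono_null (fun z hz => show z ∈ Wᶜ ∩ U from ⟨hz.2, hρ hz.1⟩) h
  rw [inter_comm, measure_inter_conull' hnull,
    ENNReal.div_self (measure_ball_pos volume y hρ₀).ne' measure_ball_lt_top.ne]

theorem inter_frontier_densityOnePoints_nonempty_iff (hW : MeasurableSet W)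
    {U : Set (EuclideanSpace ℝ (Fin n))} (hU : IsOpen U) (hU' : IsPreconnected U) :
    (U ∩ frontier (densityOnePoints n W)).Nonempty ↔
      0 < volume (W ∩ U) ∧ 0 < volume (Wᶜ ∩ U) := by
  set D := densityOnePoints n W
  have hDW : D =ᵐ[volume] W := densityOnePoints_ae_eq hW
  constructor
  · rintro ⟨y, hyU, hyD⟩
    refine ⟨pos_iff_ne_zero.2 fun h => ?_, pos_iff_ne_zero.2 fun h => ?_⟩
    · have hdisj := disjoint_densityOnePoints_of_measure_inter_eq_zero hU h
      exact disjoint_left.1 (hdisj.closure_right hU) hyU (frontier_subset_closure hyD)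
    · exact hyD.2 (interior_maximal
        (subset_densityOnePoints_of_measure_compl_inter_eq_zero hU h) hU hyU)
  · rintro ⟨hin, hout⟩
    refine hU'.inter_frontier_nonempty ?_ ?_
    · rw [inter_comm]
      refine nonempty_of_measure_ne_zero (μ := volume) ?_
      rw [measure_congr (hDW.inter (ae_eq_refl U))]
      exact hin.ne'
    · rw [sdiff_eq, inter_comm]
      refine nonempty_of_measure_ne_zero (μ := volume) ?_
      rw [measure_congr (hDW.compl.inter (ae_eq_refl U))]
      exact hout.ne'

theorem mem_thickening_frontier_densityOnePoints_iff (hW : MeasurableSet W) (r : ℝ)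
    (x : EuclideanSpace ℝ (Fin n)) :
    x ∈ thickening r (frontier (densityOnePoints n W)) ↔
      0 < volume.restrict (ball x r) W ∧ 0 < volume.restrict (ball x r) Wᶜ := by
  rw [Measure.restrict_apply' measurableSet_ball, Measure.restrict_apply' measurableSet_ball,
    ← inter_frontier_densityOnePoints_nonempty_iff hW isOpen_ball
      (convex_ball x r).isPreconnected, mem_thickening_iff]
  simp only [Set.Nonempty, mem_inter_iff, mem_ball, dist_comm x]
  exact ⟨fun ⟨z, hz, hxz⟩ => ⟨z, hxz, hz⟩, fun ⟨z, hxz, hz⟩ => ⟨z, hz, hxz⟩⟩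

theorem mem_thickening_frontier_densityOnePoints_setOf_lt_iff
    {u : EuclideanSpace ℝ (Fin n) → ℝ} (hu : Measurable u) (r s : ℝ)
    (x : EuclideanSpace ℝ (Fin n)) :
    x ∈ thickening r (frontier (densityOnePoints n {y | s < u y})) ↔
      s ∈ splittingLevels (volume.restrict (ball x r)) u := by
  rw [mem_thickening_frontier_densityOnePoints_iff (measurableSet_lt measurable_const hu)]
  simp only [splittingLevels, mem_ofPred_eq, compl_ofPred, not_lt]

end DensityOnePoints

theorem oscBall_eq_volume_splittingLevels (n : ℕ) (r : ℝ)
    (u : EuclideanSpace ℝ (Fin n) → ℝ) (x : EuclideanSpace ℝ (Fin n)) :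
    oscBall n r u x = volume (splittingLevels (volume.restrict (ball x r)) u) :=
  essSup_ofReal_sub_eq_volume_splittingLevels u

theorem generalized_coarea_general (n : ℕ) (r : ℝ) (hr : 0 < r)
    (Ω : Set (EuclideanSpace ℝ (Fin n)))
    (u : EuclideanSpace ℝ (Fin n) → ℝ) (hu : Measurable u) :
    ∫⁻ x in Ω, oscBall n r u x ∂volume =
      ENNReal.ofReal (2 * r) * ∫⁻ s : ℝ, perR n r {x | s < u x} Ω ∂volume := by
  set A := {p : EuclideanSpace ℝ (Fin n) × ℝ |
    p.2 ∈ splittingLevels (volume.restrict (ball p.1 r)) u}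
  have hA : MeasurableSet A := measurableSet_setOf_mem_splittingLevels_restrict_ball volume hu r
  have h2r : ENNReal.ofReal (2 * r) ≠ 0 := (ENNReal.ofReal_pos.2 (by linarith)).ne'
  calc ∫⁻ x in Ω, oscBall n r u x ∂volume = (volume.restrict Ω).prod volume A := by
        simp only [Measure.prod_apply hA, oscBall_eq_volume_splittingLevels]
        rfl
    _ = ∫⁻ s, volume (thickening r (frontier (densityOnePoints n {y | s < u y})) ∩ Ω) := by
        rw [Measure.prod_apply_symm hA]
        refine lintegral_congr fun s => ?_
        rw [← Measure.restrict_apply isOpen_thickening.measurableSet]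
        congr 1
        ext x
        exact (mem_thickening_frontier_densityOnePoints_setOf_lt_iff hu r s x).symm
    _ = ENNReal.ofReal (2 * r) * ∫⁻ s : ℝ, perR n r {x | s < u x} Ω ∂volume := by
        rw [← lintegral_const_mul' _ _ ENNReal.ofReal_ne_top]
        simp only [perR, ENNReal.mul_div_cancel h2r ENNReal.ofReal_ne_top]

/-- Generalized coarea formula:
`∫_Ω osc_{B_r(x)} u dx = 2r ∫_ℝ Per_r({u > s}, Ω) ds` in `[0, ∞]`. -/
theorem generalized_coarea (n : ℕ) (hn : 1 ≤ n) (r : ℝ) (hr : 0 < r)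
    (Ω : Set (EuclideanSpace ℝ (Fin n))) (hΩ : IsOpen Ω)
    (u : EuclideanSpace ℝ (Fin n) → ℝ) (hu : Measurable u)
    (hloc : LocallyIntegrableOn u (Metric.thickening r Ω) volume) :
    ∫⁻ x in Ω, oscBall n r u x ∂volume =
      ENNReal.ofReal (2 * r) * ∫⁻ s : ℝ, perR n r {x | s < u x} Ω ∂volume :=
  generalized_coarea_general n r hr Ω u hu
end
end

section
/- Pointwise convergence of the r-perimeters: let Ω ⊆ ℝⁿ be either open and bounded or equal to ℝⁿ, let r ∈ (0, ∞) and let (r_k) be a sequence of positive reals with r_k → r. Then for every measurable set E ⊆ ℝⁿ, Per_{r_k}(E, Ω) → Per_r(E, Ω) as k → ∞ (as a limit in [0, ∞]). -/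
open MeasureTheory Metric Set Filter Topology
open scoped RealInnerProductSpace ENNReal

noncomputable section

/-!
The function `s ↦ Lⁿ((A ⊕ B_s) ∩ Ω)` is monotone and always left-continuous, since
`A ⊕ B_r = ⋃_{s < r} A ⊕ B_s`. From the right it converges to the measure of the closed
`r`-neighbourhood, as soon as some `A ⊕ B_s` with `s > r` has finite measure in `Ω` (for `Ω = ℝⁿ`
this holds once `A ⊕ B_r` has finite measure, because `A` is then bounded). The closed and the open
`r`-neighbourhoods differ by the level set `{dist(·, A) = r}`, which is Lebesgue-null: at each
of its points `x`, with `y ∈ Ā` a nearest point, every ball `B(x, ρ)` with `ρ ≤ 2r` contains a ball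
of radius `ρ/4` on the segment `[x, y]` that misses the level set, so no point of the level set is
a density point. Hence the numerator of `Per_s(E, Ω)` is continuous at `s = r`, and so is
`Per_s(E, Ω)`.
-/

section Thickening

variable {X : Type*} [PseudoMetricSpace X] {r : ℝ}

theorem Metric.iUnion_Iio_thickening (F : Set X) (r : ℝ) :
    ⋃ s : Iio r, thickening s F = thickening r F := by
  ext x
  simp only [mem_iUnion, mem_thickening_iff, Subtype.exists, mem_Iio, exists_prop]
  refine ⟨fun ⟨s, hsr, z, hz, hxz⟩ => ⟨z, hz, hxz.trans hsr⟩, fun ⟨z, hz, hxz⟩ => ?_⟩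
  obtain ⟨s, hxs, hsr⟩ := exists_between hxz
  exact ⟨s, hsr, z, hz, hxs⟩

theorem Metric.cthickening_diff_thickening_subset (hr : 0 ≤ r) (F : Set X) :
    cthickening r F \ thickening r F ⊆ {x | infDist x F = r} := by
  rintro x ⟨hc, ht⟩
  have : infEDist x F = ENNReal.ofReal r :=
    le_antisymm (mem_cthickening_iff.1 hc)
      (not_lt.1 fun h => ht (mem_thickening_iff_infEDist_lt.2 h))
  simp [infDist, this, hr]

variable [MeasurableSpace X] (μ : Measure X) {F Ω : Set X}

theorem tendsto_measure_thickening_inter_nhdsLT (F Ω : Set X) (r : ℝ) :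
    Tendsto (fun s => μ (thickening s F ∩ Ω)) (𝓝[<] r) (𝓝 (μ (thickening r F ∩ Ω))) := by
  have : (atTop : Filter (Iio r)).IsCountablyGenerated := by
    rw [← comap_coe_Iio_nhdsLT r]
    infer_instance
  have hmono : Monotone fun s : Iio r => thickening s F ∩ Ω :=
    fun s t hst => inter_subset_inter_left _ (thickening_mono hst _)
  rw [← map_coe_Iio_atTop r, tendsto_map'_iff, ← iUnion_Iio_thickening, iUnion_inter]
  exact tendsto_measure_iUnion_atTop hmono

variable [OpensMeasurableSpace X]

theorem tendsto_measure_thickening_inter_nhdsGT (hr : 0 ≤ r) (hΩ : NullMeasurableSet Ω μ)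
    (hfin : ∃ s > r, μ (thickening s F ∩ Ω) ≠ ∞) :
    Tendsto (fun s => μ (thickening s F ∩ Ω)) (𝓝[>] r) (𝓝 (μ (cthickening r F ∩ Ω))) := by
  have hInter : ⋂ s > r, thickening s F ∩ Ω = cthickening r F ∩ Ω := by
    rw [cthickening_eq_iInter_thickening hr]
    ext x
    simp only [mem_iInter, mem_inter_iff]
    exact ⟨fun h => ⟨fun s hs => (h s hs).1, (h (r + 1) (by linarith)).2⟩,
      fun h s hs => ⟨h.1 s hs, h.2⟩⟩
  rw [← hInter]
  exact tendsto_measure_biInter_gt (fun s _ => isOpen_thickening.nullMeasurableSet.inter hΩ)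
    (fun s t _ hst => inter_subset_inter_left _ (thickening_mono hst _)) hfin

theorem continuousAt_measure_thickening_inter (hr : 0 ≤ r) (hΩ : NullMeasurableSet Ω μ)
    (hlevel : μ {x | infDist x F = r} = 0)
    (hfin : μ (thickening r F ∩ Ω) ≠ ∞ → ∃ s > r, μ (thickening s F ∩ Ω) ≠ ∞) :
    ContinuousAt (fun s => μ (thickening s F ∩ Ω)) r := by
  refine continuousAt_iff_continuous_left'_right'.2
    ⟨tendsto_measure_thickening_inter_nhdsLT μ F Ω r, ?_⟩
  by_cases htop : μ (thickening r F ∩ Ω) = ∞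
  · refine tendsto_const_nhds.congr' (eventually_nhdsWithin_of_forall fun s hs => ?_)
    exact le_antisymm (measure_mono (inter_subset_inter_left _ (thickening_mono (le_of_lt hs) _)))
      (le_top.trans_eq htop.symm)
  · have hcth : μ (cthickening r F ∩ Ω) = μ (thickening r F ∩ Ω) :=
      (measure_eq_measure_of_null_sdiff
        (inter_subset_inter_left _ (thickening_subset_cthickening r F))
        (measure_mono_null (by
          rw [← inter_sdiff_distrib_right]
          exact inter_subset_left.trans (cthickening_diff_thickening_subset hr F)) hlevel)).symm
    rw [ContinuousWithinAt, ← hcth]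
    exact tendsto_measure_thickening_inter_nhdsGT μ hr hΩ (hfin htop)

end Thickening

section NormedSpace

variable {V : Type*} [NormedAddCommGroup V] [NormedSpace ℝ V]

theorem exists_ball_subset_closedBall_diff_setOf_infDist_eq [ProperSpace V] {F : Set V}
    {r ρ : ℝ} {x : V} (hx : infDist x F = r) (hρ : 0 < ρ) (hρr : ρ ≤ 2 * r) :
    ∃ z, ball z (1 / 4 * ρ) ⊆ closedBall x ρ \ {w | infDist w F = r} := by
  have hr : 0 < r := by linarith
  have hF : (closure F).Nonempty := by
    rw [closure_nonempty_iff, nonempty_iff_ne_empty]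
    rintro rfl
    simp [infDist_empty] at hx
    linarith
  obtain ⟨y, hyF, hxy⟩ := isClosed_closure.exists_infDist_eq_dist hF x
  rw [infDist_closure, hx] at hxy
  set t := ρ / (2 * r)
  have ht0 : 0 ≤ t := by positivity
  have ht1 : t ≤ 1 := div_le_one_of_le₀ hρr (by positivity)
  have htr : t * r = ρ / 2 := by
    change ρ / (2 * r) * r = ρ / 2
    field_simp
  have hzx : dist (AffineMap.lineMap x y t) x = ρ / 2 := by
    rw [dist_lineMap_left, ← hxy, Real.norm_of_nonneg ht0, htr]
  have hzy : dist (AffineMap.lineMap x y t) y = r - ρ / 2 := by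
    rw [dist_lineMap_right, ← hxy, Real.norm_of_nonneg (by linarith)]
    linarith
  refine ⟨AffineMap.lineMap x y t, fun w hw => ⟨?_, fun hwr => ?_⟩⟩
  · rw [mem_ball] at hw
    rw [mem_closedBall]
    linarith [dist_triangle w (AffineMap.lineMap x y t) x]
  · rw [mem_ball] at hw
    have : infDist w F ≤ dist w y := infDist_closure (x := w) ▸ infDist_le_dist_of_mem hyF
    linarith [dist_triangle w (AffineMap.lineMap x y t) y, hwr.symm]

variable [FiniteDimensional ℝ V] [MeasurableSpace V] [BorelSpace V]
  (μ : Measure V) [μ.IsAddHaarMeasure]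

theorem addHaar_inter_closedBall_div_le_of_porous {S : Set V} {x z : V} {c ρ : ℝ} (hc : 0 < c)
    (hρ : 0 < ρ) (hz : ball z (c * ρ) ⊆ closedBall x ρ \ S) :
    μ (S ∩ closedBall x ρ) / μ (closedBall x ρ) ≤ 1 - ENNReal.ofReal (c ^ Module.finrank ℝ V) := by
  set κ := ENNReal.ofReal (c ^ Module.finrank ℝ V)
  have hB0 : μ (closedBall x ρ) ≠ 0 := (measure_closedBall_pos μ x hρ).ne'
  have hBtop : μ (closedBall x ρ) ≠ ∞ := measure_closedBall_lt_top.ne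
  have hball : μ (ball z (c * ρ)) = κ * μ (closedBall x ρ) := by
    rw [Measure.addHaar_ball_mul_of_pos μ z hc, Measure.addHaar_ball_of_pos μ _ hρ,
      Measure.addHaar_closedBall μ x hρ.le]
  have hsum : μ (S ∩ closedBall x ρ) + κ * μ (closedBall x ρ) ≤ μ (closedBall x ρ) := by
    rw [← hball, ← measure_union (disjoint_left.2 fun w hw hw' => (hz hw').2 hw.1)
      measurableSet_ball]
    exact measure_mono (union_subset inter_subset_right fun w hw => (hz hw).1)
  refine ENNReal.le_sub_of_add_le_right ENNReal.ofReal_ne_top ?_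
  calc μ (S ∩ closedBall x ρ) / μ (closedBall x ρ) + κ
      = (μ (S ∩ closedBall x ρ) + κ * μ (closedBall x ρ)) / μ (closedBall x ρ) := by
        rw [ENNReal.add_div, mul_div_assoc, ENNReal.div_self hB0 hBtop, mul_one]
    _ ≤ μ (closedBall x ρ) / μ (closedBall x ρ) := by gcongr
    _ = 1 := ENNReal.div_self hB0 hBtop

theorem addHaar_eq_zero_of_porous {S : Set V} (hS : MeasurableSet S) {c : ℝ} (hc : 0 < c)
    (hpor : ∀ x ∈ S, ∀ᶠ ρ in 𝓝[>] 0, ∃ z, ball z (c * ρ) ⊆ closedBall x ρ \ S) : μ S = 0 := by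
  have hlt : 1 - ENNReal.ofReal (c ^ Module.finrank ℝ V) < 1 :=
    ENNReal.sub_lt_self ENNReal.one_ne_top one_ne_zero (by positivity)
  have hfalse : ∀ᵐ x ∂μ.restrict S, False := by
    filter_upwards [Besicovitch.ae_tendsto_measure_inter_div μ S, ae_restrict_mem hS]
      with x hdens hx
    obtain ⟨ρ, hρ1, hρ0, z, hz⟩ :=
      ((hdens.eventually (eventually_gt_nhds hlt)).and
        ((eventually_mem_nhdsWithin (a := (0 : ℝ))).and (hpor x hx))).exists
    exact (addHaar_inter_closedBall_div_le_of_porous μ hc hρ0 hz).not_gt hρ1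
  simpa [ae_iff, Measure.restrict_apply_univ] using hfalse

theorem addHaar_setOf_infDist_eq (F : Set V) {r : ℝ} (hr : 0 < r) :
    μ {x | infDist x F = r} = 0 :=
  addHaar_eq_zero_of_porous μ
    (measurableSet_eq_fun (continuous_infDist_pt F).measurable measurable_const)
    (by norm_num : (0 : ℝ) < 1 / 4) fun _ hx =>
      mem_of_superset (Ioc_mem_nhdsGT (by positivity : (0 : ℝ) < 2 * r)) fun _ hρ =>
        exists_ball_subset_closedBall_diff_setOf_infDist_eq hx hρ.1 hρ.2

theorem isBounded_of_addHaar_thickening_ne_top {F : Set V} {r : ℝ} (hr : 0 < r)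
    (h : μ (thickening r F) ≠ ∞) : Bornology.IsBounded F := by
  obtain ⟨u, huF, hdisj, hcov⟩ := Vitali.exists_disjoint_subfamily_covering_enlargement_closedBall
    F id (fun _ => r / 2) (r / 2) (fun _ _ => le_rfl) 4 (by norm_num)
  have hdisj' : u.PairwiseDisjoint (ball · (r / 2)) := hdisj.mono_on fun _ _ => ball_subset_closedBall
  have hu : u.Finite := by
    have hcount : u.Countable := hdisj'.countable_of_isOpen (fun _ _ => isOpen_ball)
      fun _ _ => nonempty_ball.2 (by positivity)
    by_contra hinf
    have : Infinite u := infinite_coe_iff.2 hinf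
    refine h (top_unique ?_)
    calc ∞ = ∑' _ : u, μ (ball (0 : V) (r / 2)) :=
          (ENNReal.tsum_const_eq_top_of_ne_zero (measure_ball_pos μ 0 (by positivity)).ne').symm
      _ = ∑' b : u, μ (ball (b : V) (r / 2)) := by simp_rw [Measure.addHaar_ball_center]
      _ = μ (⋃ b ∈ u, ball b (r / 2)) :=
          (measure_biUnion hcount hdisj' fun _ _ => measurableSet_ball).symm
      _ ≤ μ (thickening r F) := measure_mono <| iUnion₂_subset fun b hb =>
          (ball_subset_thickening (huF hb) _).trans (thickening_mono (by linarith) _)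
  refine (hu.isBounded.cthickening (δ := 2 * r)).subset fun a ha => ?_
  obtain ⟨b, hb, hab⟩ := hcov a ha
  exact mem_cthickening_of_dist_le a b _ u hb
    ((mem_closedBall.1 (hab (mem_closedBall_self (by positivity)))).trans_eq (by ring))

end NormedSpace

theorem perR_tendsto_general (n : ℕ) (Ω : Set (EuclideanSpace ℝ (Fin n)))
    (hΩ : (IsOpen Ω ∧ Bornology.IsBounded Ω) ∨ Ω = Set.univ)
    (r : ℝ) (hr : 0 < r) (rk : ℕ → ℝ)
    (hlim : Tendsto rk atTop (𝓝 r))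
    (E : Set (EuclideanSpace ℝ (Fin n))) :
    Tendsto (fun k => perR n (rk k) E Ω) atTop (𝓝 (perR n r E Ω)) := by
  set F := frontier (densityOnePoints n E)
  have hΩm : MeasurableSet Ω := hΩ.elim (fun h => h.1.measurableSet) fun h => h ▸ .univ
  have hfin : volume (thickening r F ∩ Ω) ≠ ∞ → ∃ s > r, volume (thickening s F ∩ Ω) ≠ ∞ := by
    refine fun hr_fin => ⟨r + 1, by linarith, ?_⟩
    rcases hΩ with ⟨-, hb⟩ | rfl
    · exact measure_ne_top_of_subset inter_subset_right hb.measure_lt_top.ne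
    · rw [inter_univ] at hr_fin ⊢
      exact (isBounded_of_addHaar_thickening_ne_top volume hr hr_fin).thickening.measure_lt_top.ne
  have hnum := (continuousAt_measure_thickening_inter volume hr.le hΩm.nullMeasurableSet
    (addHaar_setOf_infDist_eq volume F hr) hfin).tendsto.comp hlim
  have hden : Tendsto (fun k => ENNReal.ofReal (2 * rk k)) atTop (𝓝 (ENNReal.ofReal (2 * r))) :=
    ENNReal.tendsto_ofReal (hlim.const_mul 2)
  exact ENNReal.Tendsto.div hnum (Or.inr (ENNReal.ofReal_pos.2 (by positivity)).ne') hden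
    (Or.inl ENNReal.ofReal_ne_top)

/-- Pointwise convergence of the `r`-perimeters: if `Ω` is open and bounded, or `Ω = ℝⁿ`, and
`r_k → r > 0` with `r_k > 0`, then `Per_{r_k}(E, Ω) → Per_r(E, Ω)` in `[0, ∞]`
for every measurable `E`. -/
theorem perR_tendsto (n : ℕ) (Ω : Set (EuclideanSpace ℝ (Fin n)))
    (hΩ : (IsOpen Ω ∧ Bornology.IsBounded Ω) ∨ Ω = Set.univ)
    (r : ℝ) (hr : 0 < r) (rk : ℕ → ℝ) (hrk : ∀ k, 0 < rk k)
    (hlim : Tendsto rk atTop (𝓝 r))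
    (E : Set (EuclideanSpace ℝ (Fin n))) (hE : MeasurableSet E) :
    Tendsto (fun k => perR n (rk k) E Ω) atTop (𝓝 (perR n r E Ω)) :=
  perR_tendsto_general n Ω hΩ r hr rk hlim E
end
end

section
/- Pathological behaviour on unbounded domains: let n ≥ 2, r > 0, Ω := {x ∈ ℝⁿ : x_n > 0} and E := {x ∈ ℝⁿ : x_n < −r}. Then Per_r(E, Ω) = 0, while Per_s(E, Ω) = +∞ for every s > r. -/
/-!
After identification with its density-one points, the half-space `E = {xₙ < -r}` still has the
hyperplane `{xₙ = -r}` as boundary, so the `s`-neighbourhood of `∂E` is the band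
`{|xₙ + r| < s}`. For `s = r` the band misses `Ω = {xₙ > 0}`; for `s > r` it meets `Ω` in the
slab `{0 < xₙ < s - r}`, which has infinite measure because the remaining `n - 1 ≥ 1`
coordinates are unconstrained.
-/

open MeasureTheory Metric Set Filter Topology
open scoped RealInnerProductSpace ENNReal

noncomputable section

section DensityOnePoints

variable {n : ℕ}

theorem subset_densityOnePoints_of_isOpen {E : Set (EuclideanSpace ℝ (Fin n))} (hE : IsOpen E) :
    E ⊆ densityOnePoints n E := by
  intro x hx
  obtain ⟨ε, hε, hball⟩ := Metric.isOpen_iff.mp hE x hx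
  refine tendsto_const_nhds.congr' ?_
  filter_upwards [Ioo_mem_nhdsGT hε] with ρ hρ
  rw [inter_eq_self_of_subset_right ((ball_subset_ball hρ.2.le).trans hball),
    ENNReal.div_self (measure_ball_pos volume x hρ.1).ne' measure_ball_lt_top.ne]

theorem densityOnePoints_subset_closure (E : Set (EuclideanSpace ℝ (Fin n))) :
    densityOnePoints n E ⊆ closure E := by
  intro x hx
  by_contra hxE
  obtain ⟨ε, hε, hball⟩ := Metric.isOpen_iff.mp isClosed_closure.isOpen_compl x hxE
  have hzero : Tendsto (fun ρ : ℝ => volume (E ∩ ball x ρ) / volume (ball x ρ)) (𝓝[>] 0)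
      (𝓝 0) := by
    refine tendsto_const_nhds.congr' ?_
    filter_upwards [Ioo_mem_nhdsGT hε] with ρ hρ
    have hdisj : E ∩ ball x ρ = ∅ := eq_empty_of_forall_notMem fun y hy =>
      hball (ball_subset_ball hρ.2.le hy.2) (subset_closure hy.1)
    rw [hdisj, measure_empty, ENNReal.zero_div]
  exact zero_ne_one (tendsto_nhds_unique hzero hx)

/-- `E ⊆ densityOnePoints n E ⊆ closure E` pins down closure and interior when `E` is regular
open. -/
theorem frontier_densityOnePoints_of_interior_closure_eq {E : Set (EuclideanSpace ℝ (Fin n))}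
    (hE : interior (closure E) = E) : frontier (densityOnePoints n E) = frontier E := by
  have hopen : IsOpen E := hE ▸ isOpen_interior
  have hsub := subset_densityOnePoints_of_isOpen hopen
  have hsup := densityOnePoints_subset_closure E
  have hclosure : closure (densityOnePoints n E) = closure E :=
    (closure_minimal hsup isClosed_closure).antisymm (closure_mono hsub)
  have hinterior : interior (densityOnePoints n E) = E :=
    (hE ▸ interior_mono hsup).antisymm (interior_maximal hsub hopen)
  rw [frontier, frontier, hclosure, hinterior, hopen.interior_eq]

end DensityOnePoints

theorem EuclideanSpace.proj_surjective {ι : Type*} [DecidableEq ι] (i : ι) :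
    Function.Surjective (EuclideanSpace.proj i : EuclideanSpace ℝ ι →L[ℝ] ℝ) :=
  fun a => ⟨EuclideanSpace.single i a, by simp⟩

section Coordinates

variable {ι : Type*} [Fintype ι]

theorem interior_closure_setOf_apply_lt [DecidableEq ι] (i : ι) (c : ℝ) :
    interior (closure {x : EuclideanSpace ℝ ι | x i < c}) = {x | x i < c} := by
  have hsurj := EuclideanSpace.proj_surjective i
  change interior (closure (EuclideanSpace.proj i ⁻¹' Iio c)) = _
  rw [ContinuousLinearMap.closure_preimage _ hsurj,
    ContinuousLinearMap.interior_preimage _ hsurj, closure_Iio, interior_Iic]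
  rfl

theorem frontier_setOf_apply_lt [DecidableEq ι] (i : ι) (c : ℝ) :
    frontier {x : EuclideanSpace ℝ ι | x i < c} = {x | x i = c} := by
  change frontier (EuclideanSpace.proj i ⁻¹' Iio c) = _
  rw [ContinuousLinearMap.frontier_preimage _ (EuclideanSpace.proj_surjective i), frontier_Iio]
  rfl

theorem thickening_setOf_apply_eq [DecidableEq ι] (δ : ℝ) (i : ι) (c : ℝ) :
    thickening δ {x : EuclideanSpace ℝ ι | x i = c} = {x | |x i - c| < δ} := by
  ext x
  simp only [mem_thickening_iff, mem_ofPred_eq]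
  constructor
  · rintro ⟨z, hz, hxz⟩
    calc |x i - c| = dist (x i) (z i) := by rw [hz, Real.dist_eq]
      _ ≤ dist x z := PiLp.dist_apply_le x z i
      _ < δ := hxz
  · intro hx
    refine ⟨x + (c - x i) • EuclideanSpace.single i 1, by simp, ?_⟩
    simpa [dist_self_add_right, norm_smul, abs_sub_comm] using hx

theorem volume_setOf_apply_mem_eq_top {i j : ι} (hij : i ≠ j) {s : Set ℝ}
    (hs : volume s ≠ 0) :
    volume {x : EuclideanSpace ℝ ι | x i ∈ s} = ⊤ := by
  classical
  have hpi : {x : EuclideanSpace ℝ ι | x i ∈ s} =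
      (MeasurableEquiv.toLp 2 (ι → ℝ)).symm ⁻¹'
        univ.pi (Function.update (fun _ => univ) i s) := by
    ext x
    simp [Set.mem_pi, Function.update_apply]
  have hfree : ∀ k ∈ Finset.univ \ {i}, volume (Function.update (fun _ => univ) i s k) = ⊤ :=
    fun k hk => by rw [Function.update_of_ne (by simpa using hk), Real.volume_univ]
  have hcard : (Finset.univ \ {i}).card ≠ 0 :=
    Finset.card_ne_zero.mpr ⟨j, by simpa using hij.symm⟩
  rw [hpi, (EuclideanSpace.volume_preserving_symm_measurableEquiv_toLp ι).measure_preimage_equiv,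
    volume_pi_pi, Finset.prod_eq_mul_prod_sdiff_singleton_of_mem (Finset.mem_univ i),
    Finset.prod_congr rfl hfree, Finset.prod_const, ENNReal.top_pow hcard, Function.update_self,
    ENNReal.mul_top hs]

end Coordinates

/-- Pathological behaviour on unbounded domains: for `n ≥ 2`, `Ω = {xₙ > 0}` and
`E = {xₙ < -r}`, one has `Per_r(E, Ω) = 0` while `Per_s(E, Ω) = ∞` for every `s > r`. -/
theorem pathological_unbounded (n : ℕ) (hn : 2 ≤ n) (r : ℝ) (hr : 0 < r) :
    perR n r {x : EuclideanSpace ℝ (Fin n) | x ⟨n - 1, by omega⟩ < -r}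
        {x : EuclideanSpace ℝ (Fin n) | 0 < x ⟨n - 1, by omega⟩} = 0 ∧
    ∀ s : ℝ, r < s →
      perR n s {x : EuclideanSpace ℝ (Fin n) | x ⟨n - 1, by omega⟩ < -r}
        {x : EuclideanSpace ℝ (Fin n) | 0 < x ⟨n - 1, by omega⟩} = ⊤ := by
  set i : Fin n := ⟨n - 1, by omega⟩
  have hband (s : ℝ) : thickening s (frontier (densityOnePoints n {x | x i < -r})) =
      {x | |x i + r| < s} := by
    rw [frontier_densityOnePoints_of_interior_closure_eq (interior_closure_setOf_apply_lt i _),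
      frontier_setOf_apply_lt, thickening_setOf_apply_eq]
    simp_rw [sub_neg_eq_add]
  refine ⟨?_, fun s hs => ?_⟩
  · have hempty : {x : EuclideanSpace ℝ (Fin n) | |x i + r| < r} ∩ {x | 0 < x i} = ∅ :=
      eq_empty_of_forall_notMem fun x ⟨hx, hpos⟩ => by
        linarith [le_abs_self (x i + r), hx.out, hpos.out]
    rw [perR, hband, hempty, measure_empty, ENNReal.zero_div]
  · have hj : (⟨0, by omega⟩ : Fin n) ≠ i := Fin.ne_of_val_ne (show 0 ≠ n - 1 by omega)
    have hslab : {x : EuclideanSpace ℝ (Fin n) | x i ∈ Ioo 0 (s - r)} ⊆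
        {x | |x i + r| < s} ∩ {x | 0 < x i} := fun x ⟨hpos, hlt⟩ =>
      ⟨show |x i + r| < s from abs_lt.mpr ⟨by linarith, by linarith⟩, hpos⟩
    rw [perR, hband, measure_mono_top hslab
      (volume_setOf_apply_mem_eq_top hj.symm (by simpa using hs))]
    exact ENNReal.top_div_of_ne_top ENNReal.ofReal_ne_top
end
end

section
/- Existence for the Dirichlet problem: let r > 0, let Ω ⊆ ℝⁿ be bounded open, let Ω' be open with closure contained in Ω, and let E_o ⊆ ℝⁿ be measurable. Then there exists a measurable set E ⊆ ℝⁿ with E \ Ω' = E_o \ Ω' such that Per_r(E, Ω) ≤ Per_r(F, Ω) for every measurable F ⊆ ℝⁿ with F \ Ω' = E_o \ Ω'. The same holds with Per_r(·, Ω) replaced by F_{r,g}(·, Ω) for any g ∈ L¹_loc(ℝⁿ). -/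
/-!
Take a minimising sequence `F k` and, instead of extracting subsequences, pass to the limit along
an ultrafilter finer than `atTop`. The measures `volume` restricted to `F k ∩ Ω'` then converge
setwise to a measure `ν ≤ volume` on `Ω'` with density `u ∈ [0, 1]`, and the integrals of `g`
over `F k ∩ Ω'` converge to `∫ g dν = ∫ u g`. The limit set keeps `{u = 1}`, drops `{u = 0}`
and decides `{0 < u < 1}` by the sign of `g`, so its integral term is at most `∫ u g`.

The `r`-perimeter only sees which balls meet a set and its complement in positive measure: all
balls around a frontier point of the density-one points do, and conversely such a ball meets that
frontier (Lebesgue's density theorem and connectedness of balls). Balls met on both sides by the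
limit set are met on both sides by `F k` for `k` along the ultrafilter, so by compactness every
compact subset of the `r`-neighbourhood of the frontier for the limit set eventually lies in the
one for `F k`, and inner regularity gives lower semicontinuity of `Per_r`.
-/

open MeasureTheory Metric Set Filter Topology
open scoped RealInnerProductSpace ENNReal

noncomputable section

/-- The energy `F_{r,g}(E, Ω) = Per_r(E, Ω) + ∫_{E ∩ Ω} g`, as an extended real number. -/
def FRG (n : ℕ) (r : ℝ) (g : EuclideanSpace ℝ (Fin n) → ℝ)
    (E Ω : Set (EuclideanSpace ℝ (Fin n))) : EReal :=
  (perR n r E Ω : EReal) + ((∫ x in E ∩ Ω, g x : ℝ) : EReal)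

lemma exists_isMinOn_of_forall_tendsto {β : Type*} {J : β → ℝ} {s : Set β} (hs : s.Nonempty)
    (hJ : BddBelow (J '' s))
    (h : ∀ F : ℕ → β, (∀ k, F k ∈ s) → ∀ m, Tendsto (J ∘ F) atTop (𝓝 m) → ∃ E ∈ s, J E ≤ m) :
    ∃ E ∈ s, IsMinOn J s E := by
  obtain ⟨v, -, hv, hvs⟩ := exists_seq_tendsto_sInf (hs.image J) hJ
  choose F hFs hFv using hvs
  obtain ⟨E, hE, hEm⟩ := h F hFs _ (by rwa [show J ∘ F = v from funext hFv])
  exact ⟨E, hE, fun G hG => hEm.trans (csInf_le hJ (mem_image_of_mem J hG))⟩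

lemma toReal_add_le_of_le_liminf {ι : Type*} {l : Filter ι} [l.NeBot] {p : ℝ≥0∞}
    {ps : ι → ℝ≥0∞} (hps : ∀ k, ps k ≠ ∞) (hp : p ≤ liminf ps l) {as : ι → ℝ} {a b m : ℝ}
    (hm : Tendsto (fun k => (ps k).toReal + as k) l (𝓝 m)) (has : Tendsto as l (𝓝 b))
    (hab : a ≤ b) : p.toReal + a ≤ m := by
  have hps' : Tendsto (fun k => (ps k).toReal) l (𝓝 (m - b)) := by simpa using hm.sub has
  have hlim : Tendsto ps l (𝓝 (ENNReal.ofReal (m - b))) :=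
    (ENNReal.tendsto_ofReal hps').congr fun k => ENNReal.ofReal_toReal (hps k)
  rw [hlim.liminf_eq] at hp
  have := ENNReal.toReal_le_of_le_ofReal (ge_of_tendsto' hps' fun _ => ENNReal.toReal_nonneg) hp
  linarith

section SetwiseLimit

variable {α ι : Type*} [MeasurableSpace α] {μ ν : Measure α}

theorem Ultrafilter.exists_le_tendsto_measure [IsFiniteMeasure μ] (U : Ultrafilter ι)
    (μs : ι → Measure α) (hμs : ∀ k, μs k ≤ μ) :
    ∃ ν ≤ μ, ∀ s, MeasurableSet s → Tendsto (fun k => μs k s) U (𝓝 (ν s)) := by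
  let m : Set α → ℝ≥0∞ := fun s => (U.map fun k => μs k s).lim
  have hm : ∀ s, Tendsto (fun k => μs k s) U (𝓝 (m s)) := fun s => by
    simpa [Tendsto, Ultrafilter.coe_map] using (U.map fun k => μs k s).le_nhds_lim
  have hm_empty : m ∅ = 0 := tendsto_nhds_unique (hm ∅) (by simp)
  have hm_iUnion : ∀ ⦃f : ℕ → Set α⦄, (∀ i, MeasurableSet (f i)) →
      Pairwise (Function.onFun Disjoint f) → m (⋃ i, f i) = ∑' i, m (f i) := by
    intro f hf hdisj
    have hsum : ∀ k J, μs k (⋃ i, f i) =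
        ∑ i ∈ Finset.range J, μs k (f i) + ∑' i, μs k (f (i + J)) := fun k J => by
      rw [measure_iUnion hdisj hf, ENNReal.summable.sum_add_tsum_nat_add']
    refine le_antisymm ?_ (ENNReal.tsum_le_of_sum_range_le fun J => ?_)
    · -- the tails `⋃ i ≥ J, f i` are uniformly small since all `μs k` are dominated by `μ`
      have hJ : ∀ J, m (⋃ i, f i) ≤ ∑ i ∈ Finset.range J, m (f i) + ∑' i, μ (f (i + J)) :=
        fun J => le_of_tendsto_of_tendsto (hm _)
          ((tendsto_finsetSum _ fun i _ => hm (f i)).add tendsto_const_nhds)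
          (Eventually.of_forall fun k => by dsimp only; rw [hsum k J]; gcongr; exact hμs k)
      have htail : Tendsto (fun J => ∑' i, μ (f (i + J))) atTop (𝓝 0) :=
        ENNReal.tendsto_sum_nat_add _ (by rw [← measure_iUnion hdisj hf]; exact measure_ne_top μ _)
      exact ge_of_tendsto (by simpa using (ENNReal.tendsto_nat_tsum _).add htail)
        (Eventually.of_forall hJ)
    · exact le_of_tendsto_of_tendsto (tendsto_finsetSum _ fun i _ => hm (f i)) (hm _)
        (Eventually.of_forall fun k => by dsimp only; rw [hsum k J]; exact le_self_add)
  refine ⟨Measure.ofMeasurable (fun s _ => m s) hm_empty hm_iUnion,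
    Measure.le_iff.2 fun s hs => ?_, fun s hs => ?_⟩ <;> rw [Measure.ofMeasurable_apply s hs]
  exacts [le_of_tendsto (hm s) (Eventually.of_forall fun k => hμs k s), hm s]

lemma lipschitzWith_integral_of_le (h : ν ≤ μ) :
    LipschitzWith 1 fun f : α →₁[μ] ℝ => ∫ x, f x ∂ν := by
  refine LipschitzWith.of_dist_le_mul fun f g => ?_
  rw [NNReal.coe_one, one_mul, Real.dist_eq, ← integral_sub
    ((L1.integrable_coeFn f).mono_measure h) ((L1.integrable_coeFn g).mono_measure h),
    dist_eq_norm, L1.norm_eq_integral_norm]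
  calc ‖∫ x, f x - g x ∂ν‖ ≤ ∫ x, ‖f x - g x‖ ∂ν := norm_integral_le_integral_norm _
    _ ≤ ∫ x, ‖f x - g x‖ ∂μ := integral_mono_measure h
        (Eventually.of_forall fun _ => norm_nonneg _)
        ((L1.integrable_coeFn f).sub (L1.integrable_coeFn g)).norm
    _ = ∫ x, ‖(f - g) x‖ ∂μ :=
        integral_congr_ae ((Lp.coeFn_sub f g).mono fun x hx => by simp only [hx, Pi.sub_apply])

theorem tendsto_integral_of_tendsto_measure_of_le {l : Filter ι} {μs : ι → Measure α}
    (hμs : ∀ k, μs k ≤ μ) (hν : ν ≤ μ)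
    (h : ∀ s, MeasurableSet s → Tendsto (fun k => μs k s) l (𝓝 (ν s)))
    {g : α → ℝ} (hg : Integrable g μ) :
    Tendsto (fun k => ∫ x, g x ∂μs k) l (𝓝 (∫ x, g x ∂ν)) := by
  refine hg.induction (P := fun g => Tendsto (fun k => ∫ x, g x ∂μs k) l (𝓝 (∫ x, g x ∂ν)))
    ?_ ?_ ?_ ?_
  · intro c s hs hμs'
    simp only [integral_indicator_const _ hs, Measure.real]
    exact ((ENNReal.tendsto_toReal ((hν s).trans_lt hμs').ne).comp (h s hs)).smul_const c
  · intro f₁ f₂ _ hf₁ hf₂ h₁ h₂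
    simp only [Pi.add_apply]
    rw [integral_add (hf₁.mono_measure hν) (hf₂.mono_measure hν)]
    refine (h₁.add h₂).congr fun k => ?_
    rw [integral_add (hf₁.mono_measure (hμs k)) (hf₂.mono_measure (hμs k))]
  · exact (LipschitzWith.uniformEquicontinuous _ 1 fun k =>
      lipschitzWith_integral_of_le (hμs k)).equicontinuous.isClosed_setOfPred_tendsto
      (lipschitzWith_integral_of_le hν).continuous
  · intro f₁ f₂ hf _ h₁
    rw [integral_congr_ae (hf.filter_mono (ae_mono hν)).symm]
    exact h₁.congr fun k => integral_congr_ae (hf.filter_mono (ae_mono (hμs k)))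

lemma measure_ne_zero_of_rnDeriv_ne_zero [ν.HaveLebesgueDecomposition μ] (hνμ : ν ≪ μ)
    {s : Set α} (hs : MeasurableSet s) (h : μ ({x | ν.rnDeriv μ x ≠ 0} ∩ s) ≠ 0) :
    ν s ≠ 0 := by
  rw [← Measure.setLIntegral_rnDeriv' hνμ hs, Ne,
    lintegral_eq_zero_iff (Measure.measurable_rnDeriv _ _)]
  rwa [EventuallyEq, ae_iff, Measure.restrict_apply' hs]

lemma measure_lt_of_rnDeriv_ne_one [SigmaFinite μ] [ν.HaveLebesgueDecomposition μ]
    (hνμ : ν ≤ μ) {s : Set α} (hs : MeasurableSet s) (hμs : μ s ≠ ∞)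
    (h : μ ({x | ν.rnDeriv μ x ≠ 1} ∩ s) ≠ 0) : ν s < μ s := by
  have hac := Measure.absolutelyContinuous_of_le hνμ
  rw [← Measure.setLIntegral_rnDeriv' hac hs, ← setLIntegral_one]
  refine lintegral_strict_mono_of_ae_le_of_frequently_ae_lt aemeasurable_const ?_
    (ae_restrict_of_ae (Measure.rnDeriv_le_one_of_le hνμ)) ?_
  · rw [Measure.setLIntegral_rnDeriv' hac hs]
    exact ((hνμ s).trans_lt hμs.lt_top).ne
  · rwa [frequently_ae_iff, Measure.restrict_apply' hs]

variable {l : Filter ι} {F : ι → Set α} {E B : Set α}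

lemma eventually_measure_inter_ne_zero_of_rnDeriv [ν.HaveLebesgueDecomposition μ]
    (hνμ : ν ≪ μ) (hF : ∀ s, MeasurableSet s → Tendsto (fun k => μ (F k ∩ s)) l (𝓝 (ν s)))
    (hB : MeasurableSet B) (hE : ∀ᵐ x ∂μ, x ∈ E → ν.rnDeriv μ x ≠ 0) (h : μ (E ∩ B) ≠ 0) :
    ∀ᶠ k in l, μ (F k ∩ B) ≠ 0 := by
  refine (hF B hB).eventually_ne (measure_ne_zero_of_rnDeriv_ne_zero hνμ hB fun h0 => h ?_)
  exact measure_mono_null_ae (hE.mono fun x hx hxE => ⟨hx hxE.1, hxE.2⟩) h0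

lemma eventually_measure_compl_inter_ne_zero_of_rnDeriv [SigmaFinite μ]
    [ν.HaveLebesgueDecomposition μ] (hνμ : ν ≤ μ)
    (hF : ∀ s, MeasurableSet s → Tendsto (fun k => μ (F k ∩ s)) l (𝓝 (ν s)))
    (hB : MeasurableSet B) (hμB : μ B ≠ ∞) (hE : ∀ᵐ x ∂μ, x ∈ E → ν.rnDeriv μ x ≠ 1)
    (h : μ (E ∩ B) ≠ 0) : ∀ᶠ k in l, μ ((F k)ᶜ ∩ B) ≠ 0 := by
  have hlt := measure_lt_of_rnDeriv_ne_one hνμ hB hμB fun h0 =>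
    h (measure_mono_null_ae (hE.mono fun x hx hxE => ⟨hx hxE.1, hxE.2⟩) h0)
  filter_upwards [(hF B hB).eventually_lt_const hlt] with k hk h0
  have hsplit := measure_le_inter_add_sdiff μ B (F k)
  rw [inter_comm, measure_mono_null
    (show B \ F k ⊆ (F k)ᶜ ∩ B from fun x hx => ⟨hx.2, hx.1⟩) h0, add_zero] at hsplit
  exact hk.not_ge hsplit

lemma eventually_measure_inter_ne_zero_of_restrict {Ω' : Set α} (hΩ' : MeasurableSet Ω')
    (hEF : ∀ k, E \ Ω' ⊆ F k)
    (hE : μ.restrict Ω' (E ∩ B) ≠ 0 → ∀ᶠ k in l, μ.restrict Ω' (F k ∩ B) ≠ 0)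
    (h : μ (E ∩ B) ≠ 0) : ∀ᶠ k in l, μ (F k ∩ B) ≠ 0 := by
  by_cases h0 : μ.restrict Ω' (E ∩ B) = 0
  · have hsplit := measure_le_inter_add_sdiff μ (E ∩ B) Ω'
    rw [← Measure.restrict_apply' hΩ', h0, zero_add] at hsplit
    refine Eventually.of_forall fun k h1 => h (nonpos_iff_eq_zero.1 (hsplit.trans ?_))
    exact (measure_mono (show (E ∩ B) \ Ω' ⊆ F k ∩ B from
      fun x hx => ⟨hEF k ⟨hx.1.1, hx.2⟩, hx.1.2⟩)).trans h1.le
  · exact (hE h0).mono fun k hk h1 =>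
      hk (nonpos_iff_eq_zero.1 (h1 ▸ Measure.restrict_le_self _))

end SetwiseLimit

section DirichletClass

variable {α : Type*}

def dirichletClass [MeasurableSpace α] (Ω' Eo : Set α) : Set (Set α) :=
  {F | MeasurableSet F ∧ F \ Ω' = Eo \ Ω'}

lemma diff_subset_of_mem_dirichletClass [MeasurableSpace α] {Ω' Eo E F : Set α}
    (hE : E ∈ dirichletClass Ω' Eo) (hF : F ∈ dirichletClass Ω' Eo) : E \ Ω' ⊆ F :=
  (hE.2.trans hF.2.symm).trans_subset sdiff_subset

/-- The limit competitor, for `u` the density of the limit of the sets `F k ∩ Ω'`: it contains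
`{u = 1}`, misses `{u = 0}`, and on `{0 < u < 1}`, where the perimeter does not care, follows
the sign of `g`. -/
def dirichletLimit (Ω' Eo : Set α) (u : α → ℝ≥0∞) (g : α → ℝ) : Set α :=
  (Eo \ Ω') ∪ ({x | u x ≠ 0 ∧ (u x = 1 ∨ g x ≤ 0)} ∩ Ω')

variable {Ω' Eo : Set α} {u : α → ℝ≥0∞} {g : α → ℝ}

lemma mem_dirichletLimit_iff {x : α} (hx : x ∈ Ω') :
    x ∈ dirichletLimit Ω' Eo u g ↔ u x ≠ 0 ∧ (u x = 1 ∨ g x ≤ 0) := by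
  simp [dirichletLimit, hx]

lemma dirichletLimit_mem_dirichletClass [MeasurableSpace α] (hΩ' : MeasurableSet Ω')
    (hEo : MeasurableSet Eo) (hu : Measurable u) (hg : Measurable g) :
    dirichletLimit Ω' Eo u g ∈ dirichletClass Ω' Eo := by
  refine ⟨(hEo.diff hΩ').union (MeasurableSet.inter ?_ hΩ'), ?_⟩
  · exact (hu (measurableSet_singleton 0)).compl.inter
      ((hu (measurableSet_singleton 1)).union (measurableSet_le hg measurable_const))
  · ext x
    by_cases hx : x ∈ Ω' <;> simp [dirichletLimit, hx]

lemma indicator_dirichletLimit_le {x : α} (hx : x ∈ Ω') (hu : u x ≤ 1) :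
    (dirichletLimit Ω' Eo u g).indicator g x ≤ (u x).toReal * g x := by
  by_cases hxE : x ∈ dirichletLimit Ω' Eo u g
  · rw [indicator_of_mem hxE]
    obtain ⟨-, hu1 | hg0⟩ := (mem_dirichletLimit_iff hx).1 hxE
    · simp [hu1]
    · have ht : (u x).toReal ≤ 1 := ENNReal.toReal_le_of_le_ofReal zero_le_one (by simpa using hu)
      nlinarith
  · rw [indicator_of_notMem hxE]
    rw [mem_dirichletLimit_iff hx, not_and, not_or, not_le] at hxE
    by_cases hu0 : u x = 0
    · simp [hu0]
    · exact mul_nonneg ENNReal.toReal_nonneg (hxE hu0).2.le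

end DirichletClass

section Density

variable {n : ℕ}

local notation "ℝⁿ" => EuclideanSpace ℝ (Fin n)

lemma volume_inter_closedBall_eq_volume_inter_ball (A : Set ℝⁿ) (x : ℝⁿ) {ρ : ℝ} (hρ : ρ ≠ 0) :
    volume (A ∩ closedBall x ρ) = volume (A ∩ ball x ρ) := by
  refine measure_congr ((ae_eq_refl A).inter ?_)
  rw [← ball_union_sphere]
  exact union_ae_eq_left_of_ae_eq_empty (ae_eq_empty.2 (Measure.addHaar_sphere_of_ne_zero _ _ hρ))

lemma exists_mem_densityOnePoints_of_measure_inter_ne_zero {A B : Set ℝⁿ} (hB : MeasurableSet B)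
    (h : volume (A ∩ B) ≠ 0) : ∃ z ∈ B, z ∈ densityOnePoints n A := by
  rw [inter_comm, ← Measure.restrict_apply hB] at h
  obtain ⟨z, hzB, hz⟩ := ((frequently_ae_iff (p := (· ∈ B))).2 h).and_eventually
    (Besicovitch.ae_tendsto_measure_inter_div volume A) |>.exists
  refine ⟨z, hzB, hz.congr' ?_⟩
  filter_upwards [self_mem_nhdsWithin] with ρ (hρ : 0 < ρ)
  rw [volume_inter_closedBall_eq_volume_inter_ball A z hρ.ne', ← univ_inter (closedBall z ρ),
    volume_inter_closedBall_eq_volume_inter_ball univ z hρ.ne', univ_inter]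

lemma densityOnePoints_compl_subset {A : Set ℝⁿ} (hA : NullMeasurableSet A) :
    densityOnePoints n Aᶜ ⊆ (densityOnePoints n A)ᶜ := by
  intro z hzc hz
  have hsum : ∀ᶠ ρ in 𝓝[>] (0 : ℝ), volume (Aᶜ ∩ ball z ρ) / volume (ball z ρ) +
      volume (A ∩ ball z ρ) / volume (ball z ρ) = 1 := by
    filter_upwards [self_mem_nhdsWithin] with ρ (hρ : 0 < ρ)
    rw [← ENNReal.add_div, add_comm, inter_comm, inter_comm Aᶜ, ← sdiff_eq,
      measure_inter_add_sdiff₀ _ hA,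
      ENNReal.div_self (measure_ball_pos volume z hρ).ne' measure_ball_lt_top.ne]
  have := tendsto_nhds_unique ((hzc.add hz).congr' hsum) tendsto_const_nhds
  norm_num at this

lemma measure_inter_ball_ne_zero_of_mem_closure_densityOnePoints {A : Set ℝⁿ} {y : ℝⁿ}
    (hy : y ∈ closure (densityOnePoints n A)) {δ : ℝ} (hδ : 0 < δ) :
    volume (A ∩ ball y δ) ≠ 0 := by
  obtain ⟨z, hz, hyz⟩ := Metric.mem_closure_iff.1 hy δ hδ
  intro h0
  have hvanish : ∀ᶠ ρ in 𝓝[>] (0 : ℝ), volume (A ∩ ball z ρ) / volume (ball z ρ) = 0 := by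
    filter_upwards [Ioo_mem_nhdsGT (sub_pos.2 hyz)] with ρ hρ
    have hsub : ball z ρ ⊆ ball y δ := ball_subset_ball' (by rw [dist_comm]; linarith [hρ.2])
    rw [measure_mono_null (inter_subset_inter_right A hsub) h0, ENNReal.zero_div]
  exact one_ne_zero
    (tendsto_nhds_unique hz (tendsto_const_nhds.congr' (hvanish.mono fun _ h => h.symm)))

lemma measure_compl_inter_ball_ne_zero_of_mem_closure_compl {A : Set ℝⁿ} {y : ℝⁿ}
    (hy : y ∈ closure (densityOnePoints n A)ᶜ) {δ : ℝ} (hδ : 0 < δ) :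
    volume (Aᶜ ∩ ball y δ) ≠ 0 := by
  intro h0
  obtain ⟨z, hzy, hz⟩ := mem_closure_iff_nhds.1 hy (ball y δ) (ball_mem_nhds y hδ)
  refine hz (tendsto_const_nhds.congr' ?_)
  filter_upwards [Ioo_mem_nhdsGT (sub_pos.2 (mem_ball.1 hzy))] with ρ hρ
  have hsub : ball z ρ ⊆ ball y δ := ball_subset_ball' (by linarith [hρ.2])
  have hle := measure_le_inter_add_sdiff volume (ball z ρ) A
  rw [measure_mono_null (show ball z ρ \ A ⊆ Aᶜ ∩ ball y δ from fun x hx => ⟨hx.2, hsub hx.1⟩)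
    h0, add_zero, inter_comm] at hle
  rw [le_antisymm (measure_mono inter_subset_right) hle,
    ENNReal.div_self (measure_ball_pos volume z hρ.1).ne' measure_ball_lt_top.ne]

lemma measure_inter_ball_ne_zero_of_mem_frontier_densityOnePoints {A : Set ℝⁿ} {y : ℝⁿ}
    (hy : y ∈ frontier (densityOnePoints n A)) {δ : ℝ} (hδ : 0 < δ) :
    volume (A ∩ ball y δ) ≠ 0 ∧ volume (Aᶜ ∩ ball y δ) ≠ 0 :=
  ⟨measure_inter_ball_ne_zero_of_mem_closure_densityOnePoints (frontier_subset_closure hy) hδ,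
    measure_compl_inter_ball_ne_zero_of_mem_closure_compl
      (frontier_subset_closure (frontier_compl (densityOnePoints n A) ▸ hy)) hδ⟩

lemma ball_inter_frontier_densityOnePoints_nonempty {A : Set ℝⁿ} (hA : NullMeasurableSet A)
    {y : ℝⁿ} {δ : ℝ} (h : volume (A ∩ ball y δ) ≠ 0) (hc : volume (Aᶜ ∩ ball y δ) ≠ 0) :
    (ball y δ ∩ frontier (densityOnePoints n A)).Nonempty := by
  obtain ⟨z₁, hz₁, hz₁A⟩ :=
    exists_mem_densityOnePoints_of_measure_inter_ne_zero measurableSet_ball h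
  obtain ⟨z₂, hz₂, hz₂A⟩ :=
    exists_mem_densityOnePoints_of_measure_inter_ne_zero measurableSet_ball hc
  exact (convex_ball y δ).isPreconnected.inter_frontier_nonempty ⟨z₁, hz₁, hz₁A⟩
    ⟨z₂, hz₂, densityOnePoints_compl_subset hA hz₂A⟩

end Density

section Semicontinuity

variable {n : ℕ} {ι : Type*} {l : Filter ι} {E : Set (EuclideanSpace ℝ (Fin n))}
  {F : ι → Set (EuclideanSpace ℝ (Fin n))}

lemma eventually_mem_thickening_frontier (hF : ∀ k, NullMeasurableSet (F k))
    (hE : ∀ y δ, volume (E ∩ ball y δ) ≠ 0 → ∀ᶠ k in l, volume (F k ∩ ball y δ) ≠ 0)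
    (hEc : ∀ y δ, volume (Eᶜ ∩ ball y δ) ≠ 0 → ∀ᶠ k in l, volume ((F k)ᶜ ∩ ball y δ) ≠ 0)
    {r : ℝ} {x : EuclideanSpace ℝ (Fin n)}
    (hx : x ∈ thickening r (frontier (densityOnePoints n E))) :
    ∀ᶠ q in l ×ˢ 𝓝 x, q.2 ∈ thickening r (frontier (densityOnePoints n (F q.1))) := by
  obtain ⟨y, hy, hxy⟩ := mem_thickening_iff.1 hx
  have hδ : 0 < (r - dist x y) / 2 := half_pos (sub_pos.2 hxy)
  obtain ⟨h₁, h₂⟩ := measure_inter_ball_ne_zero_of_mem_frontier_densityOnePoints hy hδ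
  filter_upwards [((hE y _ h₁).and (hEc y _ h₂)).prod_mk (ball_mem_nhds x hδ)]
    with ⟨k, p⟩ ⟨⟨hk₁, hk₂⟩, hp⟩
  obtain ⟨w, hwy, hw⟩ := ball_inter_frontier_densityOnePoints_nonempty (hF k) hk₁ hk₂
  refine mem_thickening_iff.2 ⟨w, hw, ?_⟩
  calc dist p w ≤ dist p x + dist x y + dist y w := dist_triangle4 p x y w
    _ < (r - dist x y) / 2 + dist x y + (r - dist x y) / 2 := by
        linarith [mem_ball.1 hp, mem_ball'.1 hwy]
    _ = r := by ring

theorem measure_thickening_frontier_le_liminf (μ : Measure (EuclideanSpace ℝ (Fin n)))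
    [μ.InnerRegular] (hF : ∀ k, NullMeasurableSet (F k))
    (hE : ∀ y δ, volume (E ∩ ball y δ) ≠ 0 → ∀ᶠ k in l, volume (F k ∩ ball y δ) ≠ 0)
    (hEc : ∀ y δ, volume (Eᶜ ∩ ball y δ) ≠ 0 → ∀ᶠ k in l, volume ((F k)ᶜ ∩ ball y δ) ≠ 0)
    (r : ℝ) :
    μ (thickening r (frontier (densityOnePoints n E))) ≤
      liminf (fun k => μ (thickening r (frontier (densityOnePoints n (F k))))) l := by
  rw [isOpen_thickening.measurableSet.measure_eq_iSup_isCompact]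
  refine iSup₂_le fun K hKT => iSup_le fun hK => le_liminf_of_le (by isBoundedDefault) ?_
  have hmem := hK.mem_prod_nhdsSet_of_forall fun x hx =>
    eventually_mem_thickening_frontier hF hE hEc (hKT hx)
  exact (Filter.Eventually.curry hmem).mono fun k hk =>
    measure_mono fun x hx => hk.self_of_nhdsSet x hx

end Semicontinuity

section Existence

variable {n : ℕ}

local notation "ℝⁿ" => EuclideanSpace ℝ (Fin n)

lemma perR_ne_top {r : ℝ} (hr : 0 < r) {E Ω : Set ℝⁿ} (hΩ : Bornology.IsBounded Ω) :
    perR n r E Ω ≠ ∞ :=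
  ENNReal.div_ne_top ((measure_mono inter_subset_right).trans_lt hΩ.measure_lt_top).ne
    (ENNReal.ofReal_pos.2 (by linarith)).ne'

lemma perR_eq_smul_restrict (r : ℝ) (E Ω : Set ℝⁿ) :
    perR n r E Ω = ((ENNReal.ofReal (2 * r))⁻¹ • volume.restrict Ω)
      (thickening r (frontier (densityOnePoints n E))) := by
  rw [perR, Measure.smul_apply, Measure.restrict_apply isOpen_thickening.measurableSet,
    smul_eq_mul, div_eq_mul_inv, mul_comm]

/-- `F_{r,g}` with the perimeter read as a real number, which it is for bounded `Ω`. -/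
def energy (r : ℝ) (g : ℝⁿ → ℝ) (Ω F : Set ℝⁿ) : ℝ :=
  (perR n r F Ω).toReal + ∫ x in F ∩ Ω, g x

lemma FRG_eq_energy {r : ℝ} (hr : 0 < r) {Ω : Set ℝⁿ} (hΩ : Bornology.IsBounded Ω)
    (g : ℝⁿ → ℝ) (F : Set ℝⁿ) : FRG n r g F Ω = energy r g Ω F := by
  rw [FRG, energy, EReal.coe_add, EReal.coe_ennreal_toReal (perR_ne_top hr hΩ)]

lemma neg_integral_abs_le_energy {Ω : Set ℝⁿ} {g : ℝⁿ → ℝ} (hg : IntegrableOn g Ω) (r : ℝ)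
    (F : Set ℝⁿ) : -∫ x in Ω, |g x| ≤ energy r g Ω F := by
  have h : |∫ x in F ∩ Ω, g x| ≤ ∫ x in Ω, |g x| :=
    abs_integral_le_integral_abs.trans (setIntegral_mono_set hg.abs
      (Eventually.of_forall fun _ => abs_nonneg _) inter_subset_right.eventuallyLE)
  have := neg_abs_le (∫ x in F ∩ Ω, g x)
  have : 0 ≤ (perR n r F Ω).toReal := ENNReal.toReal_nonneg
  rw [energy]
  linarith

lemma setIntegral_inter_eq_add {Ω Ω' Eo F : Set ℝⁿ} {g : ℝⁿ → ℝ} (hΩ' : MeasurableSet Ω')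
    (hΩ'Ω : Ω' ⊆ Ω) (hg : IntegrableOn g Ω) (hF : F ∈ dirichletClass Ω' Eo) :
    ∫ x in F ∩ Ω, g x = (∫ x in Eo \ Ω' ∩ Ω, g x) + ∫ x in F, g x ∂volume.restrict Ω' := by
  have hsplit : F ∩ Ω = (Eo \ Ω' ∩ Ω) ∪ (F ∩ Ω') := by
    rw [← hF.2]
    ext x
    by_cases hx : x ∈ Ω'
    · simp [hx, hΩ'Ω hx]
    · simp [hx]
  rw [Measure.restrict_restrict hF.1, hsplit, setIntegral_union
    (disjoint_left.2 fun x hx hx' => hx.1.2 hx'.2) (hF.1.inter hΩ')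
    (hg.mono_set inter_subset_right) (hg.mono_set (inter_subset_right.trans hΩ'Ω))]

lemma setIntegral_dirichletLimit_le {Ω' Eo : Set ℝⁿ} (hΩ' : MeasurableSet Ω')
    {ν : Measure ℝⁿ} [IsFiniteMeasure ν] (hν : ν ≤ volume.restrict Ω') {g g' : ℝⁿ → ℝ}
    (hg : IntegrableOn g Ω') (hgg' : g =ᵐ[volume.restrict Ω'] g')
    (hE : MeasurableSet (dirichletLimit Ω' Eo (ν.rnDeriv (volume.restrict Ω')) g')) :
    ∫ x in dirichletLimit Ω' Eo (ν.rnDeriv (volume.restrict Ω')) g', g x ∂volume.restrict Ω' ≤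
      ∫ x, g x ∂ν := by
  have hac := Measure.absolutelyContinuous_of_le hν
  rw [← integral_indicator hE, ← integral_toReal_rnDeriv_mul hac]
  refine integral_mono_ae (hg.indicator hE)
    ((integrable_toReal_rnDeriv_mul_iff hac).2 (Integrable.mono_measure hg hν)) ?_
  filter_upwards [ae_restrict_mem hΩ', Measure.rnDeriv_le_one_of_le hν, hgg'] with x hx hu hgx
  simpa only [indicator, hgx] using indicator_dirichletLimit_le (Eo := Eo) (g := g') hx hu

theorem perR_dirichletLimit_le_liminf {ι : Type*} {l : Filter ι} {Ω' Eo : Set ℝⁿ}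
    (hΩ' : MeasurableSet Ω') {F : ι → Set ℝⁿ} (hF : ∀ k, F k ∈ dirichletClass Ω' Eo)
    {ν : Measure ℝⁿ} [IsFiniteMeasure ν] (hνμ : ν ≤ volume.restrict Ω')
    (hν : ∀ s, MeasurableSet s →
      Tendsto (fun k => volume.restrict Ω' (F k ∩ s)) l (𝓝 (ν s))) {g : ℝⁿ → ℝ}
    (hE : dirichletLimit Ω' Eo (ν.rnDeriv (volume.restrict Ω')) g ∈ dirichletClass Ω' Eo)
    (r : ℝ) (Ω : Set ℝⁿ) :
    perR n r (dirichletLimit Ω' Eo (ν.rnDeriv (volume.restrict Ω')) g) Ω ≤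
      liminf (fun k => perR n r (F k) Ω) l := by
  simp only [perR_eq_smul_restrict]
  refine measure_thickening_frontier_le_liminf _ (fun k => (hF k).1.nullMeasurableSet)
    (fun y δ => ?_) (fun y δ => ?_) r
  · exact eventually_measure_inter_ne_zero_of_restrict hΩ'
      (fun k => diff_subset_of_mem_dirichletClass hE (hF k))
      (eventually_measure_inter_ne_zero_of_rnDeriv (Measure.absolutelyContinuous_of_le hνμ) hν
        measurableSet_ball (ae_restrict_of_forall_mem hΩ' fun x hx hxE =>
          ((mem_dirichletLimit_iff hx).1 hxE).1))
  · exact eventually_measure_inter_ne_zero_of_restrict hΩ'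
      (fun k x hx hxF => hx.1 (diff_subset_of_mem_dirichletClass (hF k) hE ⟨hxF, hx.2⟩))
      (eventually_measure_compl_inter_ne_zero_of_rnDeriv hνμ hν measurableSet_ball
        ((Measure.restrict_le_self _).trans_lt measure_ball_lt_top).ne
        (ae_restrict_of_forall_mem hΩ' fun x hx hxE hu =>
          hxE ((mem_dirichletLimit_iff hx).2 ⟨hu ▸ one_ne_zero, Or.inl hu⟩)))

theorem exists_energy_le_of_tendsto {r : ℝ} (hr : 0 < r) {Ω Ω' Eo : Set ℝⁿ}
    (hΩ : Bornology.IsBounded Ω) (hΩ' : IsOpen Ω') (hΩ'Ω : Ω' ⊆ Ω) (hEo : MeasurableSet Eo)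
    {g : ℝⁿ → ℝ} (hg : IntegrableOn g Ω) {F : ℕ → Set ℝⁿ} (hF : ∀ k, F k ∈ dirichletClass Ω' Eo)
    {m : ℝ} (hm : Tendsto (fun k => energy r g Ω (F k)) atTop (𝓝 m)) :
    ∃ E ∈ dirichletClass Ω' Eo, energy r g Ω E ≤ m := by
  let U := Ultrafilter.of (atTop : Filter ℕ)
  let μ := volume.restrict Ω'
  have hΩ'm := hΩ'.measurableSet
  have : IsFiniteMeasure μ := isFiniteMeasure_restrict.2 (hΩ.subset hΩ'Ω).measure_lt_top.ne
  obtain ⟨ν, hνμ, hν⟩ :=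
    U.exists_le_tendsto_measure (fun k => μ.restrict (F k)) fun _ => Measure.restrict_le_self
  have := isFiniteMeasure_of_le μ hνμ
  have hνF : ∀ s, MeasurableSet s → Tendsto (fun k => μ (F k ∩ s)) U (𝓝 (ν s)) := fun s hs => by
    simpa only [Measure.restrict_apply hs, inter_comm] using hν s hs
  have hgΩ' : Integrable g μ := hg.mono_set hΩ'Ω
  have hE := dirichletLimit_mem_dirichletClass hΩ'm hEo (Measure.measurable_rnDeriv ν μ)
    hgΩ'.aestronglyMeasurable.stronglyMeasurable_mk.measurable
  refine ⟨_, hE, toReal_add_le_of_le_liminf (fun _ => perR_ne_top hr hΩ)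
    (perR_dirichletLimit_le_liminf hΩ'm hF hνμ hνF hE r Ω) (hm.mono_left (Ultrafilter.of_le _))
    (b := (∫ x in Eo \ Ω' ∩ Ω, g x) + ∫ x, g x ∂ν) ?_ ?_⟩
  · simp only [setIntegral_inter_eq_add hΩ'm hΩ'Ω hg (hF _)]
    exact tendsto_const_nhds.add (tendsto_integral_of_tendsto_measure_of_le
      (fun _ => Measure.restrict_le_self) hνμ hν hgΩ')
  · rw [setIntegral_inter_eq_add hΩ'm hΩ'Ω hg hE]
    exact add_le_add le_rfl (setIntegral_dirichletLimit_le hΩ'm hνμ hgΩ'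
      hgΩ'.aestronglyMeasurable.ae_eq_mk hE.1)

end Existence

theorem dirichlet_existence_general (n : ℕ) (r : ℝ) (hr : 0 < r)
    (Ω : Set (EuclideanSpace ℝ (Fin n))) (hΩb : Bornology.IsBounded Ω)
    (Ω' : Set (EuclideanSpace ℝ (Fin n))) (hΩ'o : IsOpen Ω') (hΩ' : closure Ω' ⊆ Ω)
    (Eo : Set (EuclideanSpace ℝ (Fin n))) (hEo : MeasurableSet Eo) :
    (∃ E : Set (EuclideanSpace ℝ (Fin n)), MeasurableSet E ∧ E \ Ω' = Eo \ Ω' ∧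
      ∀ F : Set (EuclideanSpace ℝ (Fin n)), MeasurableSet F → F \ Ω' = Eo \ Ω' →
        perR n r E Ω ≤ perR n r F Ω) ∧
    ∀ g : EuclideanSpace ℝ (Fin n) → ℝ, LocallyIntegrable g volume →
      ∃ E : Set (EuclideanSpace ℝ (Fin n)), MeasurableSet E ∧ E \ Ω' = Eo \ Ω' ∧
        ∀ F : Set (EuclideanSpace ℝ (Fin n)), MeasurableSet F → F \ Ω' = Eo \ Ω' →
          FRG n r g E Ω ≤ FRG n r g F Ω := by
  have hmin : ∀ g, IntegrableOn g Ω →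
      ∃ E ∈ dirichletClass Ω' Eo, IsMinOn (energy r g Ω) (dirichletClass Ω' Eo) E :=
    fun g hg => exists_isMinOn_of_forall_tendsto ⟨Eo, hEo, rfl⟩
      ⟨_, forall_mem_image.2 fun F _ => neg_integral_abs_le_energy hg r F⟩
      fun F hF _ hm => exists_energy_le_of_tendsto hr hΩb hΩ'o (subset_closure.trans hΩ') hEo hg
        hF hm
  refine ⟨?_, fun g hg => ?_⟩
  · obtain ⟨E, hE, hEmin⟩ := hmin 0 integrableOn_zero
    refine ⟨E, hE.1, hE.2, fun F hFm hFb => ?_⟩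
    have := hEmin ⟨hFm, hFb⟩
    simpa [energy, ENNReal.toReal_le_toReal (perR_ne_top hr hΩb) (perR_ne_top hr hΩb)] using this
  · obtain ⟨E, hE, hEmin⟩ :=
      hmin g ((hg.integrableOn_isCompact hΩb.isCompact_closure).mono_set subset_closure)
    refine ⟨E, hE.1, hE.2, fun F hFm hFb => ?_⟩
    rw [FRG_eq_energy hr hΩb, FRG_eq_energy hr hΩb]
    exact EReal.coe_le_coe_iff.2 (hEmin ⟨hFm, hFb⟩)

/-- Existence for the Dirichlet problem: given `Ω' ⋐ Ω` and exterior datum `E_o`, there is a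
minimizer of `Per_r(·, Ω)` (and of `F_{r,g}(·, Ω)` for any locally integrable `g`) among
measurable sets coinciding with `E_o` outside `Ω'`. -/
theorem dirichlet_existence (n : ℕ) (r : ℝ) (hr : 0 < r)
    (Ω : Set (EuclideanSpace ℝ (Fin n))) (hΩo : IsOpen Ω) (hΩb : Bornology.IsBounded Ω)
    (Ω' : Set (EuclideanSpace ℝ (Fin n))) (hΩ'o : IsOpen Ω') (hΩ' : closure Ω' ⊆ Ω)
    (Eo : Set (EuclideanSpace ℝ (Fin n))) (hEo : MeasurableSet Eo) :
    (∃ E : Set (EuclideanSpace ℝ (Fin n)), MeasurableSet E ∧ E \ Ω' = Eo \ Ω' ∧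
      ∀ F : Set (EuclideanSpace ℝ (Fin n)), MeasurableSet F → F \ Ω' = Eo \ Ω' →
        perR n r E Ω ≤ perR n r F Ω) ∧
    ∀ g : EuclideanSpace ℝ (Fin n) → ℝ, LocallyIntegrable g volume →
      ∃ E : Set (EuclideanSpace ℝ (Fin n)), MeasurableSet E ∧ E \ Ω' = Eo \ Ω' ∧
        ∀ F : Set (EuclideanSpace ℝ (Fin n)), MeasurableSet F → F \ Ω' = Eo \ Ω' →
          FRG n r g E Ω ≤ FRG n r g F Ω :=
  dirichlet_existence_general n r hr Ω hΩb Ω' hΩ'o hΩ' Eo hEo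
end
end

section
/- Classification of one-dimensional Class A minimizers: let n = 1 and r > 0. If E ⊆ ℝ is a Class A minimizer for Per_r, then, up to a set of Lebesgue measure zero, E is either the empty set, or all of ℝ, or a halfline of the form (a, +∞) or (−∞, a) for some a ∈ ℝ. -/
open MeasureTheory Metric Set Filter Topology
open scoped RealInnerProductSpace ENNReal

noncomputable section

/-- The inner domain `D ⊖ B_r = {x ∈ D : dist(x, ∂D) ≥ r}`. -/
def innerDomain (n : ℕ) (r : ℝ) (D : Set (EuclideanSpace ℝ (Fin n))) :
    Set (EuclideanSpace ℝ (Fin n)) :=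
  {x ∈ D | r ≤ Metric.infDist x (frontier D)}

/-- `E` is a minimizer of `Per_r` in `D`: it minimizes among measurable competitors that
coincide with `E` outside `D ⊖ B_r`. -/
def IsMinimizerPerR (n : ℕ) (r : ℝ) (E D : Set (EuclideanSpace ℝ (Fin n))) : Prop :=
  ∀ F : Set (EuclideanSpace ℝ (Fin n)), MeasurableSet F →
    F \ innerDomain n r D = E \ innerDomain n r D → perR n r E D ≤ perR n r F D

/-!
Transport everything to `ℝ` by the coordinate isometry. Let `D` be the set of density points of
`E`, so that `E = D` almost everywhere, and `S = ∂D`. Filling `[a, b]` is an admissible competitor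
in the window `(a - r, b + r)`, and its `r`-neighbourhood of the boundary meets the window only in
`B_r(a) ∪ B_r(b)`; hence every such window carries a boundary layer of measure at most `4r`. Three
points of `S` at mutual distance `≥ 2r` would carry `6r`, so `S` is bounded. If `S = ∅`, `D` is
`∅` or `ℝ`. Otherwise let `a = min S`, `b = max S`: on each of `(-∞, a)` and `(b, ∞)` the set `D`
is empty or full, and emptying or filling `[a, b]` produces a competitor equal a.e. to `∅`, `ℝ` or
a halfline, whose boundary layer in the window has measure at most `2r`. The layer of `E` contains
`B_r(a) ∪ B_r(b)`, of measure `> 2r` unless `a = b`; so `a = b` and `E` is a halfline.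
-/

section DensityPoints

variable {X : Type*} [PseudoMetricSpace X] [MeasurableSpace X]

def densityPoints (μ : Measure X) (E : Set X) : Set X :=
  {x | Tendsto (fun ρ : ℝ => μ (E ∩ ball x ρ) / μ (ball x ρ)) (𝓝[>] 0) (𝓝 1)}

variable {μ : Measure X} {E F G : Set X}

lemma densityPoints_congr (h : E =ᵐ[μ] F) : densityPoints μ E = densityPoints μ F := by
  have hEF : ∀ x ρ, μ (E ∩ ball x ρ) = μ (F ∩ ball x ρ) := fun _ _ =>
    measure_congr (ae_eq_set_inter h (ae_eq_refl _))
  simp only [densityPoints, hEF]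

lemma densityPoints_subset_closure : densityPoints μ E ⊆ closure E := by
  intro x hx
  by_contra hxE
  obtain ⟨δ, hδ, hball⟩ := isOpen_iff.1 isClosed_closure.isOpen_compl x hxE
  have hzero : (fun ρ : ℝ => μ (E ∩ ball x ρ) / μ (ball x ρ)) =ᶠ[𝓝[>] 0] fun _ => 0 := by
    filter_upwards [Ioo_mem_nhdsGT hδ] with ρ hρ
    have : E ∩ ball x ρ = ∅ := disjoint_iff_inter_eq_empty.1 <|
      (subset_compl_iff_disjoint_left.1 ((ball_subset_ball hρ.2.le).trans hball)).mono_left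
        subset_closure
    simp [this]
  exact zero_ne_one (tendsto_nhds_unique (tendsto_const_nhds.congr' hzero.symm) hx)

lemma interior_subset_densityPoints [ProperSpace X] [IsFiniteMeasureOnCompacts μ]
    [μ.IsOpenPosMeasure] : interior E ⊆ densityPoints μ E := by
  intro x hx
  obtain ⟨δ, hδ, hball⟩ := isOpen_iff.1 isOpen_interior x hx
  refine tendsto_const_nhds.congr' ?_
  filter_upwards [Ioo_mem_nhdsGT hδ] with ρ hρ
  rw [inter_eq_right.2 (((ball_subset_ball hρ.2.le).trans hball).trans interior_subset),
    ENNReal.div_self (measure_ball_pos μ x hρ.1).ne' measure_ball_lt_top.ne]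

lemma frontier_densityPoints_subset [ProperSpace X] [IsFiniteMeasureOnCompacts μ]
    [μ.IsOpenPosMeasure] : frontier (densityPoints μ E) ⊆ frontier E :=
  fun _ hx => ⟨closure_minimal densityPoints_subset_closure isClosed_closure hx.1,
    fun h => hx.2 (interior_maximal interior_subset_densityPoints isOpen_interior h)⟩

def boundaryLayer (μ : Measure X) (r : ℝ) (E Ω : Set X) : ℝ≥0∞ :=
  μ (thickening r (frontier (densityPoints μ E)) ∩ Ω)

lemma boundaryLayer_le_of_ae_eq [ProperSpace X] [IsFiniteMeasureOnCompacts μ]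
    [μ.IsOpenPosMeasure] {r : ℝ} (h : F =ᵐ[μ] G) (Ω : Set X) :
    boundaryLayer μ r F Ω ≤ μ (thickening r (frontier G) ∩ Ω) := by
  rw [boundaryLayer, densityPoints_congr h]
  exact measure_mono (inter_subset_inter_left _
    (thickening_subset_of_subset r frontier_densityPoints_subset))

end DensityPoints

lemma ae_eq_densityPoints {V : Type*} [NormedAddCommGroup V] [NormedSpace ℝ V]
    [FiniteDimensional ℝ V] [MeasurableSpace V] [BorelSpace V] [Nontrivial V]
    (μ : Measure V) [μ.IsAddHaarMeasure] {E : Set V} (hE : MeasurableSet E) :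
    E =ᵐ[μ] densityPoints μ E := by
  filter_upwards [Besicovitch.ae_tendsto_measure_inter_div_of_measurableSet μ hE] with x hx
  have hball : Tendsto (fun ρ : ℝ => μ (E ∩ ball x ρ) / μ (ball x ρ)) (𝓝[>] 0)
      (𝓝 (E.indicator 1 x)) := by
    refine hx.congr fun ρ => ?_
    have hae : closedBall x ρ =ᵐ[μ] ball x ρ :=
      (ae_eq_of_subset_of_measure_ge ball_subset_closedBall
        (Measure.addHaar_closedBall_eq_addHaar_ball μ x ρ).le
        measurableSet_ball.nullMeasurableSet measure_closedBall_lt_top.ne).symm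
    rw [measure_congr hae, measure_congr (ae_eq_set_inter (ae_eq_refl E) hae)]
  refine propext ⟨fun hxE => ?_, fun hx1 => by_contra fun hxE => ?_⟩
  · rw [indicator_of_mem hxE] at hball
    exact hball
  · rw [indicator_of_notMem hxE] at hball
    exact one_ne_zero (tendsto_nhds_unique hx1 hball)

lemma perR_eq_boundaryLayer (n : ℕ) (r : ℝ) (E Ω : Set (EuclideanSpace ℝ (Fin n))) :
    perR n r E Ω = boundaryLayer volume r E Ω / ENNReal.ofReal (2 * r) :=
  rfl

namespace IsometryEquiv

variable {X Y : Type*} [PseudoMetricSpace X] [PseudoMetricSpace Y] (e : X ≃ᵢ Y)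

lemma infEDist_preimage (x : X) (A : Set Y) : infEDist x (e ⁻¹' A) = infEDist (e x) A := by
  rw [← e.image_symm, ← Metric.infEDist_image e.symm.isometry, e.symm_apply_apply]

lemma infDist_preimage (x : X) (A : Set Y) : infDist x (e ⁻¹' A) = infDist (e x) A := by
  rw [infDist, infDist, infEDist_preimage]

lemma preimage_symm_preimage (A : Set X) : e ⁻¹' (e.symm ⁻¹' A) = A :=
  e.toEquiv.preimage_symm_preimage A

lemma preimage_thickening (r : ℝ) (A : Set Y) :
    thickening r (e ⁻¹' A) = e ⁻¹' thickening r A := by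
  ext x
  simp only [mem_preimage, mem_thickening_iff_infEDist_lt, infEDist_preimage]

variable [MeasurableSpace X] [BorelSpace X] [MeasurableSpace Y] [BorelSpace Y]
  {μ : Measure X} {ν : Measure Y}

lemma measure_preimage (he : MeasurePreserving e μ ν) (B : Set Y) : μ (e ⁻¹' B) = ν B :=
  he.measure_preimage_equiv (f := e.toHomeomorph.toMeasurableEquiv) B

lemma preimage_densityPoints (he : MeasurePreserving e μ ν) (A : Set Y) :
    densityPoints μ (e ⁻¹' A) = e ⁻¹' densityPoints ν A := by
  ext x
  have hball : ∀ ρ, ball x ρ = e ⁻¹' ball (e x) ρ := fun ρ => by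
    rw [e.preimage_ball, e.symm_apply_apply]
  simp only [densityPoints, mem_preimage, mem_ofPred_eq, hball, ← preimage_inter,
    e.measure_preimage he]

lemma boundaryLayer_preimage (he : MeasurePreserving e μ ν) (r : ℝ) (E Ω : Set Y) :
    boundaryLayer μ r (e ⁻¹' E) (e ⁻¹' Ω) = boundaryLayer ν r E Ω := by
  have hfr : frontier (e ⁻¹' densityPoints ν E) = e ⁻¹' frontier (densityPoints ν E) :=
    (e.toHomeomorph.preimage_frontier _).symm
  rw [boundaryLayer, e.preimage_densityPoints he, hfr, e.preimage_thickening, ← preimage_inter,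
    e.measure_preimage he, boundaryLayer]

end IsometryEquiv

theorem IsPreconnected.subset_or_disjoint_of_disjoint_frontier {X : Type*} [TopologicalSpace X]
    {U D : Set X} (hU : IsPreconnected U) (h : Disjoint U (frontier D)) :
    U ⊆ D ∨ Disjoint U D := by
  have hcover : U ⊆ interior D ∪ (closure D)ᶜ := fun x hx => by
    by_cases hxD : x ∈ closure D
    · exact .inl (by_contra fun hxi => h.ne_of_mem hx ⟨hxD, hxi⟩ rfl)
    · exact .inr hxD
  exact (hU.subset_or_subset isOpen_interior isClosed_closure.isOpen_compl
    (disjoint_compl_right.mono_left interior_subset_closure) hcover).imp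
    (·.trans interior_subset) fun hU' => (subset_compl_iff_disjoint_right.1 hU').mono_right
      subset_closure

lemma Set.sdiff_Icc_eq_inter_Iio_union_inter_Ioi {α : Type*} [LinearOrder α] {a b : α}
    (D : Set α) : D \ Icc a b = D ∩ Iio a ∪ D ∩ Ioi b := by
  ext y
  simp only [Set.mem_sdiff, mem_Icc, mem_union, mem_inter_iff, mem_Iio, mem_Ioi, not_and_or,
    not_le]
  tauto

namespace Real

variable {a b r : ℝ}

lemma ball_subset_Ioo {s : ℝ} (hs : s ∈ Icc a b) : ball s r ⊆ Ioo (a - r) (b + r) := by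
  rw [Real.ball_eq_Ioo]
  exact Ioo_subset_Ioo (by linarith [hs.1]) (by linarith [hs.2])

lemma thickening_inter_Ioo_subset {T : Set ℝ} (hT : Disjoint T (Ioo a b)) :
    thickening r T ∩ Ioo (a - r) (b + r) ⊆ ball a r ∪ ball b r := by
  rintro y ⟨hy, hya, hyb⟩
  obtain ⟨z, hz, hyz⟩ := mem_thickening_iff.1 hy
  rw [Real.dist_eq, abs_lt] at hyz
  simp only [mem_union, Real.ball_eq_Ioo, mem_Ioo]
  by_cases hza : z ≤ a
  · exact .inl ⟨hya, by linarith⟩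
  by_cases hzb : b ≤ z
  · exact .inr ⟨by linarith, hyb⟩
  exact (hT.ne_of_mem hz ⟨not_le.1 hza, not_le.1 hzb⟩ rfl).elim

lemma volume_ball_union_ball_le (hr : 0 ≤ r) :
    volume (ball a r ∪ ball b r) ≤ ENNReal.ofReal (4 * r) := by
  calc volume (ball a r ∪ ball b r) ≤ volume (ball a r) + volume (ball b r) := measure_union_le _ _
    _ = ENNReal.ofReal (4 * r) := by
      rw [Real.volume_ball, Real.volume_ball, ← ENNReal.ofReal_add (by positivity) (by positivity)]
      ring_nf

lemma eq_of_volume_ball_union_ball_le (hr : 0 < r) (hab : a ≤ b)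
    (h : volume (ball a r ∪ ball b r) ≤ ENNReal.ofReal (2 * r)) : a = b := by
  refine hab.eq_of_not_lt fun hlt => h.not_gt ?_
  have hgap : Ioo (max (a + r) (b - r)) (b + r) ⊆ ball b r \ ball a r := by
    rintro y ⟨hy, hyb⟩
    rw [max_lt_iff] at hy
    rw [Real.ball_eq_Ioo, Real.ball_eq_Ioo]
    exact ⟨⟨hy.2, hyb⟩, fun hya => hya.2.not_gt hy.1⟩
  have hpos : 0 < volume (ball b r \ ball a r) := by
    refine lt_of_lt_of_le ?_ (measure_mono hgap)
    rw [Real.volume_Ioo, ENNReal.ofReal_pos, sub_pos, max_lt_iff]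
    constructor <;> linarith
  rw [← union_sdiff_self, measure_union disjoint_sdiff_right (measurableSet_ball.diff
    measurableSet_ball), Real.volume_ball]
  exact ENNReal.lt_add_right ENNReal.ofReal_ne_top hpos.ne'

end Real

open Real

/-- On the line, the inner domain of the ball `Ioo (a - r) (b + r)` is `Icc a b`; balls of radius
less than `r` have empty inner domain and impose no condition. -/
def IsLineClassAMinimizer (r : ℝ) (E : Set ℝ) : Prop :=
  ∀ a b, a ≤ b → ∀ F : Set ℝ, MeasurableSet F → F \ Icc a b = E \ Icc a b →
    boundaryLayer volume r E (Ioo (a - r) (b + r)) ≤ boundaryLayer volume r F (Ioo (a - r) (b + r))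

namespace IsLineClassAMinimizer

variable {a b r : ℝ} {E : Set ℝ} (h : IsLineClassAMinimizer r E)
include h

lemma boundaryLayer_le (hE : MeasurableSet E) (hr : 0 ≤ r) (hab : a ≤ b) :
    boundaryLayer volume r E (Ioo (a - r) (b + r)) ≤ ENNReal.ofReal (4 * r) := by
  have hfilled : Disjoint (frontier (E ∪ Icc a b)) (Ioo a b) :=
    disjoint_interior_frontier.symm.mono_right <| interior_maximal
      (Ioo_subset_Icc_self.trans subset_union_right) isOpen_Ioo
  calc boundaryLayer volume r E (Ioo (a - r) (b + r))
      ≤ boundaryLayer volume r (E ∪ Icc a b) (Ioo (a - r) (b + r)) :=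
        h a b hab _ (hE.union measurableSet_Icc) union_sdiff_right
    _ ≤ volume (thickening r (frontier (E ∪ Icc a b)) ∩ Ioo (a - r) (b + r)) :=
        boundaryLayer_le_of_ae_eq (ae_eq_refl _) _
    _ ≤ volume (ball a r ∪ ball b r) := measure_mono (thickening_inter_Ioo_subset hfilled)
    _ ≤ ENNReal.ofReal (4 * r) := volume_ball_union_ball_le hr

lemma volume_ball_union_le_of_ae_eq (ha : a ∈ frontier (densityPoints volume E))
    (hb : b ∈ frontier (densityPoints volume E)) (hab : a ≤ b) {F G : Set ℝ}
    (hF : MeasurableSet F) (hFE : F \ Icc a b = E \ Icc a b) (hFG : F =ᵐ[volume] G) :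
    volume (ball a r ∪ ball b r) ≤ volume (thickening r (frontier G) ∩ Ioo (a - r) (b + r)) :=
  calc volume (ball a r ∪ ball b r)
      ≤ boundaryLayer volume r E (Ioo (a - r) (b + r)) :=
        measure_mono <| union_subset
          (subset_inter (ball_subset_thickening ha r) (ball_subset_Ioo ⟨le_rfl, hab⟩))
          (subset_inter (ball_subset_thickening hb r) (ball_subset_Ioo ⟨hab, le_rfl⟩))
    _ ≤ boundaryLayer volume r F (Ioo (a - r) (b + r)) := h a b hab F hF hFE
    _ ≤ _ := boundaryLayer_le_of_ae_eq hFG _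

lemma volume_ball_union_le_cut (hE : MeasurableSet E)
    (ha : a ∈ frontier (densityPoints volume E)) (hb : b ∈ frontier (densityPoints volume E))
    (hab : a ≤ b) :
    volume (ball a r ∪ ball b r) ≤ volume (thickening r (frontier
      (densityPoints volume E ∩ Iio a ∪ densityPoints volume E ∩ Ioi b)) ∩ Ioo (a - r) (b + r)) :=
  h.volume_ball_union_le_of_ae_eq ha hb hab (hE.diff measurableSet_Icc) sdiff_idem <| by
    rw [← sdiff_Icc_eq_inter_Iio_union_inter_Ioi]
    exact ae_eq_set_sdiff (ae_eq_densityPoints volume hE) (ae_eq_refl _)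

lemma volume_ball_union_le_fill (hE : MeasurableSet E)
    (ha : a ∈ frontier (densityPoints volume E)) (hb : b ∈ frontier (densityPoints volume E))
    (hab : a ≤ b) :
    volume (ball a r ∪ ball b r) ≤ volume (thickening r (frontier
      (densityPoints volume E ∩ Iio a ∪ densityPoints volume E ∩ Ioi b ∪ Icc a b)) ∩
        Ioo (a - r) (b + r)) :=
  h.volume_ball_union_le_of_ae_eq ha hb hab (hE.union measurableSet_Icc) union_sdiff_right <| by
    rw [← sdiff_Icc_eq_inter_Iio_union_inter_Ioi, sdiff_union_self]
    exact ae_eq_set_union (ae_eq_densityPoints volume hE) (ae_eq_refl _)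

variable (hE : MeasurableSet E) (hr : 0 < r)
include hE hr

lemma false_of_spaced_frontier_points {s₁ s₂ s₃ : ℝ}
    (h₁ : s₁ ∈ frontier (densityPoints volume E)) (h₂ : s₂ ∈ frontier (densityPoints volume E))
    (h₃ : s₃ ∈ frontier (densityPoints volume E)) (h12 : s₁ + 2 * r ≤ s₂)
    (h23 : s₂ + 2 * r ≤ s₃) : False := by
  have hsub : ball s₁ r ∪ (ball s₂ r ∪ ball s₃ r) ⊆
      thickening r (frontier (densityPoints volume E)) ∩ Ioo (s₁ - r) (s₃ + r) := by
    refine union_subset ?_ (union_subset ?_ ?_) <;>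
      refine subset_inter (ball_subset_thickening ‹_› r) (ball_subset_Ioo ⟨?_, ?_⟩) <;> linarith
  have hdisj : ∀ {s t : ℝ}, s + 2 * r ≤ t → Disjoint (ball s r) (ball t r) := fun hst =>
    ball_disjoint_ball (by rw [Real.dist_eq, abs_of_nonpos (by linarith)]; linarith)
  have hvol : volume (ball s₁ r ∪ (ball s₂ r ∪ ball s₃ r)) = ENNReal.ofReal (6 * r) := by
    rw [measure_union ((hdisj (by linarith)).union_right (hdisj (by linarith)))
      (measurableSet_ball.union measurableSet_ball), measure_union (hdisj h23) measurableSet_ball,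
      Real.volume_ball, Real.volume_ball, Real.volume_ball,
      ← ENNReal.ofReal_add (by positivity) (by positivity),
      ← ENNReal.ofReal_add (by positivity) (by positivity)]
    ring_nf
  have := (hvol ▸ measure_mono hsub).trans (h.boundaryLayer_le hE hr.le (a := s₁) (b := s₃)
    (by linarith))
  rw [ENNReal.ofReal_le_ofReal_iff (by positivity)] at this
  linarith

lemma bddAbove_frontier_densityPoints : BddAbove (frontier (densityPoints volume E)) := by
  by_contra hS
  rw [not_bddAbove_iff] at hS
  obtain ⟨s₁, h₁, -⟩ := hS 0
  obtain ⟨s₂, h₂, h12⟩ := hS (s₁ + 2 * r)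
  obtain ⟨s₃, h₃, h23⟩ := hS (s₂ + 2 * r)
  exact h.false_of_spaced_frontier_points hE hr h₁ h₂ h₃ h12.le h23.le

lemma bddBelow_frontier_densityPoints : BddBelow (frontier (densityPoints volume E)) := by
  by_contra hS
  rw [not_bddBelow_iff] at hS
  obtain ⟨s₃, h₃, -⟩ := hS 0
  obtain ⟨s₂, h₂, h23⟩ := hS (s₃ - 2 * r)
  obtain ⟨s₁, h₁, h12⟩ := hS (s₂ - 2 * r)
  exact h.false_of_spaced_frontier_points hE hr h₁ h₂ h₃ (by linarith) (by linarith)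

lemma exists_frontier_densityPoints_subset_Icc
    (hS : (frontier (densityPoints volume E)).Nonempty) :
    ∃ a b, a ∈ frontier (densityPoints volume E) ∧ b ∈ frontier (densityPoints volume E) ∧
      frontier (densityPoints volume E) ⊆ Icc a b := by
  have hc : IsCompact (frontier (densityPoints volume E)) :=
    isCompact_of_isClosed_isBounded isClosed_frontier <| isBounded_iff_bddBelow_bddAbove.2
      ⟨h.bddBelow_frontier_densityPoints hE hr, h.bddAbove_frontier_densityPoints hE hr⟩
  obtain ⟨a, ha, ha'⟩ := hc.exists_isLeast hS
  obtain ⟨b, hb, hb'⟩ := hc.exists_isGreatest hS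
  exact ⟨a, b, ha, hb, fun s hs => ⟨ha' hs, hb' hs⟩⟩

theorem ae_eq_empty_or_univ_or_halfline :
    E =ᵐ[volume] (∅ : Set ℝ) ∨ E =ᵐ[volume] univ ∨
      ∃ a, E =ᵐ[volume] Ioi a ∨ E =ᵐ[volume] Iio a := by
  set D := densityPoints volume E
  have hED : E =ᵐ[volume] D := ae_eq_densityPoints volume hE
  rcases (frontier D).eq_empty_or_nonempty with hS | hS
  · rcases frontier_eq_empty_iff.1 hS with hD | hD
    · exact .inl (hD ▸ hED)
    · exact .inr (.inl (hD ▸ hED))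
  obtain ⟨a, b, ha, hb, hSab⟩ := h.exists_frontier_densityPoints_subset_Icc hE hr hS
  have hab : a ≤ b := (hSab ha).2
  have hside : ∀ U, IsPreconnected U → Disjoint U (Icc a b) → D ∩ U = U ∨ D ∩ U = ∅ :=
    fun U hU hUab => (hU.subset_or_disjoint_of_disjoint_frontier (hUab.mono_right hSab)).imp
      inter_eq_right.2 fun hUD => hUD.symm.inter_eq
  have hcut := h.volume_ball_union_le_cut hE ha hb hab
  have hfill := h.volume_ball_union_le_fill hE ha hb hab
  have hpos : 0 < volume (ball a r ∪ ball b r) :=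
    (measure_ball_pos volume a hr).trans_le (measure_mono subset_union_left)
  have hhalf : ∀ t, volume (ball a r ∪ ball b r) ≤
      volume (thickening r {t} ∩ Ioo (a - r) (b + r)) → a = b := fun t ht =>
    eq_of_volume_ball_union_ball_le hr hab <| ht.trans <|
      (measure_mono inter_subset_left).trans_eq (by rw [thickening_singleton, Real.volume_ball])
  have hfilled : a = b → D =ᵐ[volume] (D ∩ Iio a ∪ D ∩ Ioi b ∪ Icc a b : Set ℝ) := fun hab' => by
    rw [← sdiff_Icc_eq_inter_Iio_union_inter_Ioi, sdiff_union_self]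
    exact (union_ae_eq_left_of_ae_eq_empty (by simp [hab'])).symm
  rcases hside (Iio a) isPreconnected_Iio (disjoint_left.2 fun y hy hy' => hy.not_ge hy'.1)
    with hL | hL <;>
  rcases hside (Ioi b) isPreconnected_Ioi (disjoint_left.2 fun y hy hy' => hy.not_ge hy'.2)
    with hR | hR <;>
  rw [hL, hR] at hcut hfill hfilled
  · rw [union_assoc, union_comm (Ioi b), Icc_union_Ioi_eq_Ici hab, Iio_union_Ici, frontier_univ,
      thickening_empty, empty_inter, measure_empty] at hfill
    exact absurd hfill hpos.not_ge
  · rw [union_empty, Iio_union_Icc_eq_Iic hab] at hfill hfilled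
    rw [frontier_Iic] at hfill
    exact .inr (.inr ⟨b, .inr (hED.trans ((hfilled (hhalf b hfill)).trans Iio_ae_eq_Iic.symm))⟩)
  · rw [empty_union, union_comm (Ioi b), Icc_union_Ioi_eq_Ici hab] at hfill hfilled
    rw [frontier_Ici] at hfill
    exact .inr (.inr ⟨a, .inl (hED.trans ((hfilled (hhalf a hfill)).trans Ioi_ae_eq_Ici.symm))⟩)
  · rw [union_empty, frontier_empty, thickening_empty, empty_inter, measure_empty] at hcut
    exact absurd hcut hpos.not_ge

end IsLineClassAMinimizer

def coordIso : EuclideanSpace ℝ (Fin 1) ≃ᵢ ℝ :=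
  (OrthonormalBasis.singleton (Fin 1) ℝ).repr.symm.toIsometryEquiv

lemma coordIso_apply (x : EuclideanSpace ℝ (Fin 1)) : coordIso x = x 0 := by
  change (OrthonormalBasis.singleton (Fin 1) ℝ).repr.symm x = x 0
  simp [← OrthonormalBasis.sum_repr_symm]

lemma measurePreserving_coordIso : MeasurePreserving coordIso :=
  (OrthonormalBasis.singleton (Fin 1) ℝ).repr.symm.measurePreserving

lemma innerDomain_preimage_coordIso {a b r : ℝ} (hr : 0 < r) (hab : a ≤ b) :
    innerDomain 1 r (coordIso ⁻¹' Ioo (a - r) (b + r)) = coordIso ⁻¹' Icc a b := by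
  have hfr : frontier (coordIso ⁻¹' Ioo (a - r) (b + r)) = coordIso ⁻¹' {a - r, b + r} := by
    rw [← frontier_Ioo (show a - r < b + r by linarith)]
    exact (coordIso.toHomeomorph.preimage_frontier _).symm
  ext x
  simp only [innerDomain, mem_ofPred_eq, hfr, coordIso.infDist_preimage, mem_preimage,
    le_infDist (insert_nonempty _ _), forall_mem_insert, forall_eq, mem_singleton_iff, Real.dist_eq,
    mem_Ioo, mem_Icc]
  generalize coordIso x = t
  constructor
  · rintro ⟨⟨hat, htb⟩, hleft, hright⟩
    rw [abs_of_pos (by linarith)] at hleft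
    rw [abs_of_neg (by linarith)] at hright
    constructor <;> linarith
  · rintro ⟨hat, htb⟩
    refine ⟨⟨by linarith, by linarith⟩, ?_, ?_⟩
    · rw [abs_of_pos (by linarith)]; linarith
    · rw [abs_of_neg (by linarith)]; linarith

theorem isLineClassAMinimizer_of_forall_ball {r : ℝ} (hr : 0 < r)
    {E : Set (EuclideanSpace ℝ (Fin 1))}
    (hmin : ∀ x ρ, 0 < ρ → IsMinimizerPerR 1 r E (ball x ρ)) :
    IsLineClassAMinimizer r (coordIso.symm ⁻¹' E) := by
  intro a b hab F hF hFE
  have hball : ball (coordIso.symm ((a + b) / 2)) ((b - a) / 2 + r) =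
      coordIso ⁻¹' Ioo (a - r) (b + r) := by
    rw [← coordIso.preimage_ball, Real.ball_eq_Ioo]
    congr 2 <;> ring
  have hcomp := hmin (coordIso.symm ((a + b) / 2)) ((b - a) / 2 + r) (by linarith) (coordIso ⁻¹' F)
    (hF.preimage coordIso.continuous.measurable) (by
      rw [hball, innerDomain_preimage_coordIso hr hab, ← coordIso.preimage_symm_preimage E,
        ← preimage_sdiff, ← preimage_sdiff, hFE])
  have h2r : ENNReal.ofReal (2 * r) ≠ 0 := by positivity
  rwa [hball, perR_eq_boundaryLayer, perR_eq_boundaryLayer, ← coordIso.preimage_symm_preimage E,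
    coordIso.boundaryLayer_preimage measurePreserving_coordIso,
    coordIso.boundaryLayer_preimage measurePreserving_coordIso,
    ENNReal.div_le_iff h2r ENNReal.ofReal_ne_top, ENNReal.div_mul_cancel h2r ENNReal.ofReal_ne_top]
    at hcomp

/-- Classification of one-dimensional Class A minimizers: a Class A minimizer of `Per_r` in
dimension 1 is, up to a Lebesgue-null set, either empty, or all of `ℝ`, or a halfline
`(a, +∞)` or `(-∞, a)`. -/
theorem one_dimensional_classA (r : ℝ) (hr : 0 < r)
    (E : Set (EuclideanSpace ℝ (Fin 1))) (hE : MeasurableSet E)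
    (hmin : ∀ (x : EuclideanSpace ℝ (Fin 1)) (ρ : ℝ), 0 < ρ →
      IsMinimizerPerR 1 r E (ball x ρ)) :
    volume E = 0 ∨ volume Eᶜ = 0 ∨
    ∃ a : ℝ,
      volume ((E \ {x : EuclideanSpace ℝ (Fin 1) | a < x 0}) ∪
        ({x : EuclideanSpace ℝ (Fin 1) | a < x 0} \ E)) = 0 ∨
      volume ((E \ {x : EuclideanSpace ℝ (Fin 1) | x 0 < a}) ∪
        ({x : EuclideanSpace ℝ (Fin 1) | x 0 < a} \ E)) = 0 := by
  have hpull : ∀ {G : Set ℝ}, coordIso.symm ⁻¹' E =ᵐ[volume] G →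
      E =ᵐ[volume] coordIso ⁻¹' G := fun hG =>
    coordIso.preimage_symm_preimage E ▸
      measurePreserving_coordIso.quasiMeasurePreserving.preimage_ae_eq hG
  have hcoord : ∀ p : ℝ → Prop,
      {x : EuclideanSpace ℝ (Fin 1) | p (x 0)} = coordIso ⁻¹' {t | p t} := fun p => by
    ext; simp [coordIso_apply]
  rcases (isLineClassAMinimizer_of_forall_ball hr hmin).ae_eq_empty_or_univ_or_halfline
    (hE.preimage coordIso.symm.continuous.measurable) hr with h | h | ⟨a, h | h⟩
  · exact .inl (ae_eq_empty.1 (hpull h))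
  · exact .inr (.inl (ae_eq_univ.1 (hpull h)))
  · exact .inr (.inr ⟨a, .inl (hcoord (a < ·) ▸ measure_symmDiff_eq_zero_iff.2 (hpull h))⟩)
  · exact .inr (.inr ⟨a, .inr (hcoord (· < a) ▸ measure_symmDiff_eq_zero_iff.2 (hpull h))⟩)
end
end

section
/- Nonlocal Poincaré–Wirtinger inequality: for every n ≥ 1 there exists a constant C > 0, depending only on n, such that the following holds. Let λ ≥ 1, R > 0 and r > 0 with r ≤ λR, and let u be a measurable function on B_{R+r} which is integrable on B_R. Set ⟨u⟩_R := (1/Lⁿ(B_R)) ∫_{B_R} u. Then ∫_{B_R} |u − ⟨u⟩_R| dx ≤ (C R λ / r) ∫_{B_R} osc_{B_r(x)} u dx (as an inequality in [0, ∞]). -/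
/-
Averaging over `B = B_R` gives `∫_B |u - ⟨u⟩_R| ≤ |B|⁻¹ ∫_B ∫_B |u x - u y|`. Split the segment
from `x` to `y` into `N ≈ 4R/r` pieces: the linear change of variables
`(x, y) ↦ (x + (i/N)(y - x), x + ((i+1)/N)(y - x))` has Jacobian `N⁻ⁿ` and sends `B × B` into the
pairs `p, q ∈ B` with `|p - q| < 2R/N ≤ r/2`, so the double integral is at most `N^(n+1)` times
the integral of `|u p - u q|` over such close pairs. For a close pair, the points `z ∈ B` with
`p, q ∈ B_r(z)` contain a ball of radius `r/4`, so integrating over `z` bounds the close-pair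
integral by `|B_{r/4}|⁻¹ ∫_B ∫∫_{B_r(z)²} |u p - u q|`, and the inner integral is at most
`2 |B_r|² osc_{B_r(z)} u`. If `r > 2R`, run the argument with radius `2R`: the oscillation is
monotone in the radius.
-/

open MeasureTheory Metric Set Filter Topology
open scoped RealInnerProductSpace ENNReal

noncomputable section

open Module

theorem edist_le_sum_edist_segment {E X : Type*} [AddCommGroup E] [Module ℝ E]
    [PseudoEMetricSpace X] (u : E → X) {N : ℕ} (hN : N ≠ 0) (x y : E) :
    edist (u x) (u y) ≤ ∑ i ∈ Finset.range N,
      edist (u (x + (i / N : ℝ) • (y - x))) (u (x + ((i + 1) / N : ℝ) • (y - x))) := by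
  have hN' : (N : ℝ) ≠ 0 := Nat.cast_ne_zero.mpr hN
  simpa [hN'] using edist_le_range_sum_edist (fun j : ℕ => u (x + (j / N : ℝ) • (y - x))) N

theorem lintegral_abs_sub_setAverage_le {α : Type*} [MeasurableSpace α] {μ : Measure α}
    {s : Set α} (hs₀ : μ s ≠ 0) (hs : μ s ≠ ∞) {u : α → ℝ} (hu : IntegrableOn u s μ) :
    ∫⁻ x in s, ENNReal.ofReal |u x - ⨍ y in s, u y ∂μ| ∂μ ≤
      (μ s)⁻¹ * ∫⁻ x in s, ∫⁻ y in s, edist (u x) (u y) ∂μ ∂μ := by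
  rw [← lintegral_const_mul' _ _ (ENNReal.inv_ne_top.mpr hs₀)]
  refine lintegral_mono fun x => ?_
  have hconst : IntegrableOn (fun _ => u x) s μ := integrableOn_const hs
  have hdiff : IntegrableOn (fun y => u x - u y) s μ := hconst.sub hu
  have hmean : ⨍ y in s, (u x - u y) ∂μ = u x - ⨍ y in s, u y ∂μ := by
    rw [setAverage_eq, integral_sub hconst hu, smul_sub, ← setAverage_eq, ← setAverage_eq,
      setAverage_const hs₀ hs]
  calc ENNReal.ofReal |u x - ⨍ y in s, u y ∂μ|
      ≤ ENNReal.ofReal (⨍ y in s, |u x - u y| ∂μ) := by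
        rw [← hmean, setAverage_eq, setAverage_eq, smul_eq_mul, smul_eq_mul, abs_mul,
          abs_of_nonneg (by positivity)]
        gcongr
        exact abs_integral_le_integral_abs
    _ = (μ s)⁻¹ * ∫⁻ y in s, edist (u x) (u y) ∂μ := by
        rw [ofReal_setAverage hdiff.abs (Eventually.of_forall fun _ => abs_nonneg _),
          ENNReal.div_eq_inv_mul]
        simp only [edist_dist, Real.dist_eq]

theorem lintegral_prod_edist_le_essSup {α : Type*} [MeasurableSpace α] (ν : Measure α)
    [SFinite ν] {u : α → ℝ} (hu : Measurable u) :
    ∫⁻ w, edist (u w.1) (u w.2) ∂(ν.prod ν) ≤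
      2 * ν univ ^ 2 * essSup (fun w : α × α => ENNReal.ofReal (u w.1 - u w.2)) (ν.prod ν) := by
  set ψ : α × α → ℝ≥0∞ := fun w => ENNReal.ofReal (u w.1 - u w.2)
  have hψ : Measurable ψ := by fun_prop
  have hsplit : ∀ w : α × α, edist (u w.1) (u w.2) ≤ ψ w + ψ w.swap := fun w => by
    rw [edist_dist, Real.dist_eq, abs_eq_max_neg, ENNReal.ofReal_max, neg_sub]
    exact max_le le_self_add le_add_self
  calc ∫⁻ w, edist (u w.1) (u w.2) ∂(ν.prod ν)
      ≤ ∫⁻ w, ψ w ∂(ν.prod ν) + ∫⁻ w, ψ w.swap ∂(ν.prod ν) :=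
        (lintegral_mono hsplit).trans_eq (lintegral_add_left hψ _)
    _ = 2 * ∫⁻ w, ψ w ∂(ν.prod ν) := by rw [lintegral_prod_swap, two_mul]
    _ ≤ 2 * ∫⁻ _, essSup ψ (ν.prod ν) ∂(ν.prod ν) := by
        gcongr 2 * ?_
        exact lintegral_mono_ae (ENNReal.ae_le_essSup ψ)
    _ = 2 * ν univ ^ 2 * essSup ψ (ν.prod ν) := by
        rw [lintegral_const, ← univ_prod_univ, Measure.prod_prod]
        ring

section NormedSpace

variable {E : Type*} [NormedAddCommGroup E] [NormedSpace ℝ E]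

def closePairs (s : Set E) (κ : ℝ) : Set (E × E) :=
  {w | w.1 ∈ s ∧ w.2 ∈ s ∧ dist w.1 w.2 < κ}

theorem segment_mem_closePairs_ball {R s t : ℝ} (hs : 0 ≤ s) (hst : s < t) (ht : t ≤ 1)
    {x y : E} (hx : x ∈ ball (0 : E) R) (hy : y ∈ ball (0 : E) R) :
    (x + s • (y - x), x + t • (y - x)) ∈ closePairs (ball (0 : E) R) (2 * R * (t - s)) := by
  refine ⟨(convex_ball 0 R).add_smul_sub_mem hx hy ⟨hs, hst.le.trans ht⟩,
    (convex_ball 0 R).add_smul_sub_mem hx hy ⟨hs.trans hst.le, ht⟩, ?_⟩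
  have hxy : ‖y - x‖ < 2 * R := by
    rw [mem_ball_zero_iff] at hx hy
    linarith [norm_sub_le y x]
  rw [dist_comm, dist_eq_norm, add_sub_add_left_eq_sub, ← sub_smul, norm_smul,
    Real.norm_of_nonneg (sub_nonneg.mpr hst.le)]
  nlinarith [sub_pos.mpr hst]

variable [MeasurableSpace E] [BorelSpace E] {μ : Measure E} [μ.IsAddHaarMeasure]

/-- A ball of radius `r / 4` around `(1 - r / (4R)) p` fits into the intersection. -/
theorem measure_ball_le_measure_ball_inter_ball_inter_ball {R r : ℝ} (hr : 0 < r)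
    (hrR : r ≤ 4 * R) {p q : E} (hp : p ∈ ball (0 : E) R) (hpq : dist p q < r / 2) :
    μ (ball (0 : E) (r / 4)) ≤ μ (ball p r ∩ ball q r ∩ ball (0 : E) R) := by
  rw [mem_ball_zero_iff] at hp
  have hR : 0 < R := (norm_nonneg p).trans_lt hp
  set c : ℝ := r / (4 * R)
  have hc : c ≤ 1 := (div_le_one (by positivity)).mpr hrR
  have hcR : c * R = r / 4 := by simp only [c]; field_simp
  have hcenter : dist ((1 - c) • p) p < r / 4 := by
    rw [dist_eq_norm, sub_smul, one_smul, sub_sub_cancel_left, norm_neg, norm_smul,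
      Real.norm_of_nonneg (by positivity), ← hcR]
    exact mul_lt_mul_of_pos_left hp (by positivity)
  have hnorm : ‖(1 - c) • p‖ ≤ (1 - c) * R := by
    rw [norm_smul, Real.norm_of_nonneg (by linarith)]
    exact mul_le_mul_of_nonneg_left hp.le (by linarith)
  rw [← Measure.addHaar_ball_center μ ((1 - c) • p)]
  refine measure_mono fun z hz => ?_
  rw [mem_ball] at hz
  have hzp : dist z p < r / 2 := by linarith [dist_triangle z ((1 - c) • p) p]
  refine ⟨⟨?_, ?_⟩, ?_⟩
  · rw [mem_ball]; linarith
  · rw [mem_ball]; linarith [dist_triangle z p q]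
  · rw [mem_ball_zero_iff]
    linarith [norm_le_norm_add_norm_sub' z ((1 - c) • p), dist_eq_norm z ((1 - c) • p)]

variable [FiniteDimensional ℝ E]

theorem measurableSet_closePairs {s : Set E} (hs : MeasurableSet s) (κ : ℝ) :
    MeasurableSet (closePairs s κ) :=
  (hs.preimage measurable_fst).inter ((hs.preimage measurable_snd).inter
    (isOpen_lt continuous_dist continuous_const).measurableSet)

theorem setLIntegral_lintegral_ball_prod_ball {φ : E × E → ℝ≥0∞} (hφ : Measurable φ)
    (s : Set E) (r : ℝ) :
    ∫⁻ z in s, ∫⁻ w in ball z r ×ˢ ball z r, φ w ∂(μ.prod μ) ∂μ =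
      ∫⁻ w, μ (ball w.1 r ∩ ball w.2 r ∩ s) * φ w ∂(μ.prod μ) := by
  have hmeas : Measurable fun a : E × (E × E) => (ball a.1 r ×ˢ ball a.1 r).indicator φ a.2 :=
    (hφ.comp measurable_snd).indicator (measurableSet_lt (by fun_prop) measurable_const |>.inter
      (measurableSet_lt (by fun_prop) measurable_const))
  have hslice : ∀ w : E × E, (fun z => (ball z r ×ˢ ball z r).indicator φ w) =
      (ball w.1 r ∩ ball w.2 r).indicator fun _ => φ w := fun w => by
    ext z
    by_cases hz : z ∈ ball w.1 r ∩ ball w.2 r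
    · have hw : w ∈ ball z r ×ˢ ball z r := ⟨mem_ball_comm.mp hz.1, mem_ball_comm.mp hz.2⟩
      rw [indicator_of_mem hz, indicator_of_mem hw]
    · have hw : w ∉ ball z r ×ˢ ball z r := fun hw =>
        hz ⟨mem_ball_comm.mp hw.1, mem_ball_comm.mp hw.2⟩
      rw [indicator_of_notMem hz, indicator_of_notMem hw]
  calc ∫⁻ z in s, ∫⁻ w in ball z r ×ˢ ball z r, φ w ∂(μ.prod μ) ∂μ
      = ∫⁻ z in s, ∫⁻ w, (ball z r ×ˢ ball z r).indicator φ w ∂(μ.prod μ) ∂μ := by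
        refine lintegral_congr fun z => ?_
        rw [lintegral_indicator (measurableSet_ball.prod measurableSet_ball)]
    _ = ∫⁻ w, ∫⁻ z in s, (ball z r ×ˢ ball z r).indicator φ w ∂μ ∂(μ.prod μ) :=
        lintegral_lintegral_swap hmeas.aemeasurable
    _ = _ := by
        refine lintegral_congr fun w => ?_
        rw [hslice, lintegral_indicator_const (measurableSet_ball.inter measurableSet_ball),
          Measure.restrict_apply (measurableSet_ball.inter measurableSet_ball), mul_comm]

theorem measure_ball_mul_setLIntegral_closePairs_le {φ : E × E → ℝ≥0∞} (hφ : Measurable φ)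
    {R r κ : ℝ} (hr : 0 < r) (hrR : r ≤ 4 * R) (hκ : κ ≤ r / 2) :
    μ (ball (0 : E) (r / 4)) * ∫⁻ w in closePairs (ball (0 : E) R) κ, φ w ∂(μ.prod μ) ≤
      ∫⁻ z in ball (0 : E) R, ∫⁻ w in ball z r ×ˢ ball z r, φ w ∂(μ.prod μ) ∂μ := by
  rw [setLIntegral_lintegral_ball_prod_ball hφ,
    ← lintegral_const_mul' _ _ (measure_ball_lt_top (μ := μ)).ne,
    ← lintegral_indicator (measurableSet_closePairs measurableSet_ball _)]
  refine lintegral_mono fun w => ?_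
  by_cases hw : w ∈ closePairs (ball (0 : E) R) κ
  · rw [indicator_of_mem hw]
    gcongr ?_ * _
    exact measure_ball_le_measure_ball_inter_ball_inter_ball hr hrR hw.1 (hw.2.2.trans_le hκ)
  · rw [indicator_of_notMem hw]
    positivity

theorem measure_ball_div_measure_ball (x y : E) {a b : ℝ} (ha : 0 < a) (hb : 0 < b) :
    μ (ball x a) / μ (ball y b) = ENNReal.ofReal ((a / b) ^ finrank ℝ E) := by
  rw [Measure.addHaar_ball_of_pos μ x ha, Measure.addHaar_ball_of_pos μ y hb,
    ENNReal.mul_div_mul_right _ _ (measure_ball_pos μ 0 one_pos).ne' measure_ball_lt_top.ne,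
    ← ENNReal.ofReal_div_of_pos (by positivity), div_pow]

theorem lintegral_comp_smul_of_ne_zero (f : E → ℝ≥0∞) {c : ℝ} (hc : c ≠ 0) :
    ∫⁻ x, f (c • x) ∂μ = ENNReal.ofReal (|c|⁻¹ ^ finrank ℝ E) * ∫⁻ x, f x ∂μ := by
  calc ∫⁻ x, f (c • x) ∂μ = ∫⁻ x, f x ∂(Measure.map (c • ·) μ) :=
        (lintegral_map_equiv f (MeasurableEquiv.smul₀ c hc)).symm
    _ = _ := by
        rw [Measure.map_addHaar_smul μ hc, lintegral_smul_measure, smul_eq_mul, abs_inv, abs_pow,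
          inv_pow]

theorem lintegral_prod_comp_segment {K : E × E → ℝ≥0∞} (hK : Measurable K) {s t : ℝ}
    (hst : s ≠ t) :
    ∫⁻ w, K (w.1 + s • (w.2 - w.1), w.1 + t • (w.2 - w.1)) ∂(μ.prod μ) =
      ENNReal.ofReal (|t - s|⁻¹ ^ finrank ℝ E) * ∫⁻ w, K w ∂(μ.prod μ) := by
  have hKT : Measurable fun w : E × E => K (w.1 + s • (w.2 - w.1), w.1 + t • (w.2 - w.1)) :=
    hK.comp (by fun_prop)
  rw [lintegral_prod _ hKT.aemeasurable, lintegral_prod _ hK.aemeasurable,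
    ← lintegral_const_mul' _ _ ENNReal.ofReal_ne_top]
  calc ∫⁻ x, ∫⁻ y, K (x + s • (y - x), x + t • (y - x)) ∂μ ∂μ
      = ∫⁻ x, ∫⁻ v, K (x + s • v, x + t • v) ∂μ ∂μ := by
        refine lintegral_congr fun x => ?_
        rw [← lintegral_add_left_eq_self _ x]
        simp only [add_sub_cancel_left]
    _ = ∫⁻ v, ∫⁻ x, K (x + s • v, x + t • v) ∂μ ∂μ :=
        lintegral_lintegral_swap (hK.comp (by fun_prop)).aemeasurable
    _ = ∫⁻ v, ∫⁻ p, K (p, p + (t - s) • v) ∂μ ∂μ := by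
        refine lintegral_congr fun v => ?_
        rw [← lintegral_add_right_eq_self _ (-(s • v))]
        refine lintegral_congr fun p => congrArg K (Prod.ext ?_ ?_) <;> dsimp only <;> module
    _ = ∫⁻ p, ∫⁻ v, K (p, p + (t - s) • v) ∂μ ∂μ :=
        lintegral_lintegral_swap (hK.comp (by fun_prop)).aemeasurable
    _ = ∫⁻ p, ENNReal.ofReal (|t - s|⁻¹ ^ finrank ℝ E) * ∫⁻ q, K (p, q) ∂μ ∂μ := by
        refine lintegral_congr fun p => ?_
        rw [lintegral_comp_smul_of_ne_zero (fun v => K (p, p + v)) (sub_ne_zero.mpr hst.symm),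
          lintegral_add_left_eq_self (fun q => K (p, q))]

theorem setLIntegral_ball_prod_comp_segment_le {φ : E × E → ℝ≥0∞} (hφ : Measurable φ)
    {R s t : ℝ} (hs : 0 ≤ s) (hst : s < t) (ht : t ≤ 1) :
    ∫⁻ w in ball (0 : E) R ×ˢ ball (0 : E) R, φ (w.1 + s • (w.2 - w.1), w.1 + t • (w.2 - w.1))
        ∂(μ.prod μ) ≤
      ENNReal.ofReal ((t - s)⁻¹ ^ finrank ℝ E) *
        ∫⁻ w in closePairs (ball (0 : E) R) (2 * R * (t - s)), φ w ∂(μ.prod μ) := by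
  set K := (closePairs (ball (0 : E) R) (2 * R * (t - s))).indicator φ
  have hK : Measurable K := hφ.indicator (measurableSet_closePairs measurableSet_ball _)
  calc ∫⁻ w in ball (0 : E) R ×ˢ ball (0 : E) R,
        φ (w.1 + s • (w.2 - w.1), w.1 + t • (w.2 - w.1)) ∂(μ.prod μ)
      = ∫⁻ w in ball (0 : E) R ×ˢ ball (0 : E) R,
          K (w.1 + s • (w.2 - w.1), w.1 + t • (w.2 - w.1)) ∂(μ.prod μ) :=
        setLIntegral_congr_fun (measurableSet_ball.prod measurableSet_ball) fun w hw =>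
          (indicator_of_mem (segment_mem_closePairs_ball hs hst ht hw.1 hw.2) φ).symm
    _ ≤ ∫⁻ w, K (w.1 + s • (w.2 - w.1), w.1 + t • (w.2 - w.1)) ∂(μ.prod μ) :=
        setLIntegral_le_lintegral _ _
    _ = _ := by
        rw [lintegral_prod_comp_segment hK hst.ne, abs_of_pos (sub_pos.mpr hst),
          lintegral_indicator (measurableSet_closePairs measurableSet_ball _)]

theorem setLIntegral_ball_prod_edist_le {u : E → ℝ} (hu : Measurable u) (R : ℝ) {N : ℕ}
    (hN : N ≠ 0) :
    ∫⁻ w in ball (0 : E) R ×ˢ ball (0 : E) R, edist (u w.1) (u w.2) ∂(μ.prod μ) ≤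
      N * ENNReal.ofReal ((N : ℝ) ^ finrank ℝ E) *
        ∫⁻ w in closePairs (ball (0 : E) R) (2 * R / N), edist (u w.1) (u w.2) ∂(μ.prod μ) := by
  have hN' : (0 : ℝ) < N := by positivity
  have hstep : ∀ i ∈ Finset.range N,
      ∫⁻ w in ball (0 : E) R ×ˢ ball (0 : E) R, edist (u (w.1 + (i / N : ℝ) • (w.2 - w.1)))
          (u (w.1 + ((i + 1) / N : ℝ) • (w.2 - w.1))) ∂(μ.prod μ) ≤
        ENNReal.ofReal ((N : ℝ) ^ finrank ℝ E) *
          ∫⁻ w in closePairs (ball (0 : E) R) (2 * R / N), edist (u w.1) (u w.2) ∂(μ.prod μ) := by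
    intro i hi
    have hiN : (i + 1 : ℝ) ≤ N := by exact_mod_cast Finset.mem_range.mp hi
    have hlen : ((i + 1) / N : ℝ) - i / N = (N : ℝ)⁻¹ := by field_simp; ring
    have := setLIntegral_ball_prod_comp_segment_le (μ := μ)
      (φ := fun w => edist (u w.1) (u w.2)) (by fun_prop) (R := R) (by positivity)
      (div_lt_div_of_pos_right (lt_add_one (i : ℝ)) hN') ((div_le_one hN').mpr hiN)
    rwa [hlen, inv_inv, ← div_eq_mul_inv] at this
  calc ∫⁻ w in ball (0 : E) R ×ˢ ball (0 : E) R, edist (u w.1) (u w.2) ∂(μ.prod μ)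
      ≤ ∫⁻ w in ball (0 : E) R ×ˢ ball (0 : E) R, ∑ i ∈ Finset.range N,
          edist (u (w.1 + (i / N : ℝ) • (w.2 - w.1)))
            (u (w.1 + ((i + 1) / N : ℝ) • (w.2 - w.1))) ∂(μ.prod μ) :=
        lintegral_mono fun w => edist_le_sum_edist_segment u hN w.1 w.2
    _ = ∑ i ∈ Finset.range N, ∫⁻ w in ball (0 : E) R ×ˢ ball (0 : E) R,
          edist (u (w.1 + (i / N : ℝ) • (w.2 - w.1)))
            (u (w.1 + ((i + 1) / N : ℝ) • (w.2 - w.1))) ∂(μ.prod μ) :=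
        lintegral_finsetSum _ fun i _ => by fun_prop
    _ ≤ ∑ _i ∈ Finset.range N, ENNReal.ofReal ((N : ℝ) ^ finrank ℝ E) *
          ∫⁻ w in closePairs (ball (0 : E) R) (2 * R / N), edist (u w.1) (u w.2) ∂(μ.prod μ) :=
        Finset.sum_le_sum hstep
    _ = _ := by rw [Finset.sum_const, Finset.card_range, nsmul_eq_mul, mul_assoc]

end NormedSpace

theorem exists_chain_length {R r : ℝ} (hr : 0 < r) (hrR : r ≤ 2 * R) :
    ∃ N : ℕ, N ≠ 0 ∧ 2 * R / N ≤ r / 2 ∧ (N : ℝ) ≤ 6 * R / r := by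
  have hR : 0 < R := by linarith
  refine ⟨⌈4 * R / r⌉₊, (Nat.ceil_pos.mpr (by positivity)).ne', ?_, ?_⟩
  · rw [div_le_iff₀ (by positivity)]
    calc 2 * R = r / 2 * (4 * R / r) := by field_simp; ring
      _ ≤ r / 2 * ⌈4 * R / r⌉₊ := by gcongr; exact Nat.le_ceil _
  · have h2 : 1 ≤ 2 * R / r := by rw [le_div_iff₀ hr]; linarith
    have := Nat.ceil_lt_add_one (by positivity : 0 ≤ 4 * R / r)
    linarith [show 4 * R / r + 2 * R / r = 6 * R / r by ring]

theorem mul_div_min_two_mul_le {C R r lam : ℝ} (hC : 0 ≤ C) (hR : 0 < R) (hr : 0 < r)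
    (hlam : 1 ≤ lam) (hrR : r ≤ lam * R) : C * R / min r (2 * R) ≤ C * R * lam / r := by
  rw [mul_assoc C R lam, mul_div_assoc, mul_div_assoc]
  refine mul_le_mul_of_nonneg_left ?_ hC
  rcases le_total r (2 * R) with h | h
  · rw [min_eq_left h]
    gcongr
    exact le_mul_of_one_le_right hR.le hlam
  · rw [min_eq_right h, div_le_div_iff₀ (by positivity) hr]
    nlinarith

section Euclidean

variable {n : ℕ}

theorem oscBall_mono (u : EuclideanSpace ℝ (Fin n) → ℝ) {r' r : ℝ} (h : r' ≤ r)
    (x : EuclideanSpace ℝ (Fin n)) : oscBall n r' u x ≤ oscBall n r u x :=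
  have hres :=
    Measure.absolutelyContinuous_of_le (Measure.restrict_mono (ball_subset_ball h) le_rfl)
  essSup_mono_measure (hres.prod hres)

theorem setLIntegral_ball_prod_edist_le_oscBall {u : EuclideanSpace ℝ (Fin n) → ℝ}
    (hu : Measurable u) (r : ℝ) (z : EuclideanSpace ℝ (Fin n)) :
    ∫⁻ w in ball z r ×ˢ ball z r, edist (u w.1) (u w.2) ∂(volume.prod volume) ≤
      2 * volume (ball (0 : EuclideanSpace ℝ (Fin n)) r) ^ 2 * oscBall n r u z := by
  rw [← Measure.prod_restrict]
  refine (lintegral_prod_edist_le_essSup _ hu).trans_eq ?_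
  rw [Measure.restrict_apply_univ, Measure.addHaar_ball_center]
  rfl

theorem setLIntegral_closePairs_edist_le_oscBall {u : EuclideanSpace ℝ (Fin n) → ℝ}
    (hu : Measurable u) {R r κ : ℝ} (hr : 0 < r) (hrR : r ≤ 4 * R) (hκ : κ ≤ r / 2) :
    ∫⁻ w in closePairs (ball (0 : EuclideanSpace ℝ (Fin n)) R) κ, edist (u w.1) (u w.2)
        ∂(volume.prod volume) ≤
      2 * volume (ball (0 : EuclideanSpace ℝ (Fin n)) r) ^ 2 *
          (∫⁻ x in ball (0 : EuclideanSpace ℝ (Fin n)) R, oscBall n r u x) /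
        volume (ball (0 : EuclideanSpace ℝ (Fin n)) (r / 4)) := by
  rw [ENNReal.le_div_iff_mul_le (Or.inl (measure_ball_pos _ _ (by positivity)).ne')
    (Or.inl measure_ball_lt_top.ne)]
  refine (mul_comm _ _).trans_le ?_
  calc _ ≤ ∫⁻ z in ball (0 : EuclideanSpace ℝ (Fin n)) R,
          ∫⁻ w in ball z r ×ˢ ball z r, edist (u w.1) (u w.2) ∂(volume.prod volume) :=
        measure_ball_mul_setLIntegral_closePairs_le (by fun_prop) hr hrR hκ
    _ ≤ ∫⁻ z in ball (0 : EuclideanSpace ℝ (Fin n)) R,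
          2 * volume (ball (0 : EuclideanSpace ℝ (Fin n)) r) ^ 2 * oscBall n r u z :=
        lintegral_mono fun z => setLIntegral_ball_prod_edist_le_oscBall hu r z
    _ = _ := lintegral_const_mul' _ _ (by finiteness)

theorem lintegral_abs_sub_setAverage_le_of_chain {R r : ℝ} (hR : 0 < R) (hr : 0 < r)
    (hrR : r ≤ 4 * R) {N : ℕ} (hN : N ≠ 0) (hNr : 2 * R / N ≤ r / 2)
    {u : EuclideanSpace ℝ (Fin n) → ℝ} (hu : Measurable u)
    (hint : IntegrableOn u (ball (0 : EuclideanSpace ℝ (Fin n)) R) volume) :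
    ∫⁻ x in ball (0 : EuclideanSpace ℝ (Fin n)) R,
        ENNReal.ofReal |u x - ⨍ y in ball (0 : EuclideanSpace ℝ (Fin n)) R, u y| ≤
      ENNReal.ofReal (2 * N ^ (n + 1) * 4 ^ n * (r / R) ^ n) *
        ∫⁻ x in ball (0 : EuclideanSpace ℝ (Fin n)) R, oscBall n r u x := by
  set B := ball (0 : EuclideanSpace ℝ (Fin n)) R
  set Br := ball (0 : EuclideanSpace ℝ (Fin n)) r
  set Osc := ∫⁻ x in B, oscBall n r u x
  calc ∫⁻ x in B, ENNReal.ofReal |u x - ⨍ y in B, u y|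
      ≤ (volume B)⁻¹ * ∫⁻ x in B, ∫⁻ y in B, edist (u x) (u y) :=
        lintegral_abs_sub_setAverage_le (measure_ball_pos _ _ hR).ne' measure_ball_lt_top.ne hint
    _ = (volume B)⁻¹ * ∫⁻ w in B ×ˢ B, edist (u w.1) (u w.2) ∂(volume.prod volume) := by
        rw [setLIntegral_prod _ (by fun_prop)]
    _ ≤ (volume B)⁻¹ * (N * ENNReal.ofReal ((N : ℝ) ^ n) *
          (2 * volume Br ^ 2 * Osc / volume (ball (0 : EuclideanSpace ℝ (Fin n)) (r / 4)))) := by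
        have hchain := setLIntegral_ball_prod_edist_le (μ := volume) hu R hN
        rw [finrank_euclideanSpace_fin] at hchain
        gcongr
        exact hchain.trans (by gcongr; exact setLIntegral_closePairs_edist_le_oscBall hu hr hrR hNr)
    _ = 2 * N * ENNReal.ofReal ((N : ℝ) ^ n) * (volume Br / volume B) *
          (volume Br / volume (ball (0 : EuclideanSpace ℝ (Fin n)) (r / 4))) * Osc := by
        simp only [div_eq_mul_inv]
        ring
    _ = ENNReal.ofReal (2 * N ^ (n + 1) * 4 ^ n * (r / R) ^ n) * Osc := by
        rw [measure_ball_div_measure_ball _ _ hr hR,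
          measure_ball_div_measure_ball _ _ hr (by positivity), finrank_euclideanSpace_fin,
          show r / (r / 4) = 4 by field_simp, ← ENNReal.ofReal_natCast, ← ENNReal.ofReal_ofNat 2,
          ← ENNReal.ofReal_mul (by positivity), ← ENNReal.ofReal_mul (by positivity),
          ← ENNReal.ofReal_mul (by positivity), ← ENNReal.ofReal_mul (by positivity)]
        ring_nf

theorem lintegral_abs_sub_setAverage_le_oscBall {R r : ℝ} (hR : 0 < R) (hr : 0 < r)
    (hrR : r ≤ 2 * R) {u : EuclideanSpace ℝ (Fin n) → ℝ} (hu : Measurable u)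
    (hint : IntegrableOn u (ball (0 : EuclideanSpace ℝ (Fin n)) R) volume) :
    ∫⁻ x in ball (0 : EuclideanSpace ℝ (Fin n)) R,
        ENNReal.ofReal |u x - ⨍ y in ball (0 : EuclideanSpace ℝ (Fin n)) R, u y| ≤
      ENNReal.ofReal (12 * 24 ^ n * R / r) *
        ∫⁻ x in ball (0 : EuclideanSpace ℝ (Fin n)) R, oscBall n r u x := by
  obtain ⟨N, hN, hNr, hN6⟩ := exists_chain_length hr hrR
  refine (lintegral_abs_sub_setAverage_le_of_chain hR hr (by linarith) hN hNr hu hint).trans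
    (mul_le_mul' (ENNReal.ofReal_le_ofReal ?_) le_rfl)
  calc 2 * (N : ℝ) ^ (n + 1) * 4 ^ n * (r / R) ^ n
      ≤ 2 * (6 * R / r) ^ (n + 1) * 4 ^ n * (r / R) ^ n := by gcongr
    _ = 12 * 24 ^ n * R / r := by
        rw [show (24 : ℝ) = 6 * 4 by norm_num, mul_pow, div_pow, div_pow, mul_pow]
        field_simp
        ring

end Euclidean

theorem poincare_wirtinger_general (n : ℕ) :
    ∃ C : ℝ, 0 < C ∧
      ∀ lam : ℝ, 1 ≤ lam → ∀ R : ℝ, 0 < R → ∀ r : ℝ, 0 < r → r ≤ lam * R →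
        ∀ u : EuclideanSpace ℝ (Fin n) → ℝ, Measurable u →
          IntegrableOn u (ball (0 : EuclideanSpace ℝ (Fin n)) R) volume →
          ∫⁻ x in ball (0 : EuclideanSpace ℝ (Fin n)) R,
              ENNReal.ofReal |u x - ⨍ y in ball (0 : EuclideanSpace ℝ (Fin n)) R, u y| ≤
            ENNReal.ofReal (C * R * lam / r) *
              ∫⁻ x in ball (0 : EuclideanSpace ℝ (Fin n)) R, oscBall n r u x := by
  refine ⟨12 * 24 ^ n, by positivity, fun lam hlam R hR r hr hrR u hu hint => ?_⟩
  calc _ ≤ ENNReal.ofReal (12 * 24 ^ n * R / min r (2 * R)) *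
        ∫⁻ x in ball (0 : EuclideanSpace ℝ (Fin n)) R, oscBall n (min r (2 * R)) u x :=
        lintegral_abs_sub_setAverage_le_oscBall hR (lt_min hr (by positivity)) (min_le_right _ _)
          hu hint
    _ ≤ _ := mul_le_mul'
        (ENNReal.ofReal_le_ofReal (mul_div_min_two_mul_le (by positivity) hR hr hlam hrR))
        (lintegral_mono fun x => oscBall_mono u (min_le_left _ _) x)

/-- Nonlocal Poincaré–Wirtinger inequality: there is `C = C(n) > 0` such that for
`λ ≥ 1`, `0 < r ≤ λ R`, and `u` measurable on `B_{R+r}` and integrable on `B_R`, with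
`⟨u⟩_R` the average of `u` on `B_R`,
`∫_{B_R} |u - ⟨u⟩_R| ≤ (C R λ / r) ∫_{B_R} osc_{B_r(x)} u dx` in `[0, ∞]`. -/
theorem poincare_wirtinger (n : ℕ) (hn : 1 ≤ n) :
    ∃ C : ℝ, 0 < C ∧
      ∀ lam : ℝ, 1 ≤ lam → ∀ R : ℝ, 0 < R → ∀ r : ℝ, 0 < r → r ≤ lam * R →
        ∀ u : EuclideanSpace ℝ (Fin n) → ℝ, Measurable u →
          IntegrableOn u (ball (0 : EuclideanSpace ℝ (Fin n)) R) volume →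
          ∫⁻ x in ball (0 : EuclideanSpace ℝ (Fin n)) R,
              ENNReal.ofReal |u x - ⨍ y in ball (0 : EuclideanSpace ℝ (Fin n)) R, u y| ≤
            ENNReal.ofReal (C * R * lam / r) *
              ∫⁻ x in ball (0 : EuclideanSpace ℝ (Fin n)) R, oscBall n r u x :=
  poincare_wirtinger_general n
end
end
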